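/- arXiv:0709.1670 — 6 statements merged into one kernel-verified Lean document; each statement's English description precedes it below -/
import Mathlib

section
/- Assume there is a constant J ∈ [0,∞) with ‖ξ(t)‖₋ ≤ J e^{−2Bt} for all t ∈ [0,∞). Let f₀ ∈ F, set F# := ‖f₀‖ + NJ, suppose 4KN·F# ≤ 1, and define φ_ap(t) := e^{tA}f₀ + ∫₀^t e^{(t−s)A}ξ(s) ds (the flow of the linear equation). Then the global solution φ : [0,∞) → F of VP(f₀) satisfies ‖φ(t) − φ_ap(t)‖ ≤ KN·F#²·𝒳̂(4KN·F#)·e^{−Bt} for all t ∈ [0,∞), where 𝒳̂ : [0,1] → [1,4] is defined by 𝒳̂(z) := (1 − z/2 − √(1−z))/(z²/8) for z ∈ (0,1] and 𝒳̂(0) := 1. -/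
/-!
Picard iteration `ψ₀ = φ_ap`, `ψₙ₊₁ = φ_ap + ∫₀ᵗ e^{(t-s)A} 𝒫(ψₙ(s), ψₙ(s)) ds`, measured in the
weighted norm `sup_t e^{Bt} ‖·‖`. A term decaying like `e^{-2Bs}` in `F₋` is turned by the smoothing
estimate `∫₀ᵗ μ₋(t-s) e^{-Bs} ds ≤ N` into one decaying like `e^{-Bt}` in `F`, so
`‖ψₙ - φ_ap‖ ≤ Hₙ e^{-Bt}` and `‖ψₙ₊₁ - ψₙ‖ ≤ (Hₙ₊₁ - Hₙ) e^{-Bt}` for the scalar iteration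
`H₀ = 0`, `Hₙ₊₁ = KN (F# + Hₙ)²` (the second bound because `a² - b² = (a + b)(a - b)`).
`Hₙ` increases to at most the smaller root `KN F#² 𝒳̂(4KN F#)` of `h = KN (F# + h)²`, so the
iterates converge uniformly, also in the critical case `4KN F# = 1` where the Picard map is not a
contraction, and the limit solves `VP(f₀)` within that distance of `φ_ap`.
-/

open Set MeasureTheory Filter Topology

section

variable {E : Type*} [SeminormedAddCommGroup E]

def ExpBound (B c : ℝ) (a : ℝ → E) : Prop :=
  ∀ t ≥ (0:ℝ), ‖a t‖ ≤ c * Real.exp (-(B * t))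

namespace ExpBound

variable {B c d : ℝ} {a b : ℝ → E}

theorem nonneg (h : ExpBound B c a) : 0 ≤ c := by
  simpa using (norm_nonneg _).trans (h 0 le_rfl)

theorem mono (h : ExpBound B c a) (hcd : c ≤ d) : ExpBound B d a := fun t ht =>
  (h t ht).trans (mul_le_mul_of_nonneg_right hcd (Real.exp_pos _).le)

theorem add (ha : ExpBound B c a) (hb : ExpBound B d b) : ExpBound B (c + d) (a + b) :=
  fun t ht => (norm_add_le _ _).trans <|
    (add_le_add (ha t ht) (hb t ht)).trans_eq (add_mul _ _ _).symm

end ExpBound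

end

theorem Real.exp_neg_mul_self (B t : ℝ) :
    Real.exp (-(B * t)) * Real.exp (-(B * t)) = Real.exp (-(2 * B * t)) := by
  rw [← Real.exp_add]; ring_nf

section Bilinear

variable {F G : Type*} [NormedAddCommGroup F] [NormedSpace ℝ F]
  [NormedAddCommGroup G] [NormedSpace ℝ G] {PP : F →L[ℝ] F →L[ℝ] G} {K : ℝ}

theorem norm_apply_self_sub_apply_self_le (hPP : ∀ f g, ‖PP f g‖ ≤ K * ‖f‖ * ‖g‖) (f g : F) :
    ‖PP f f - PP g g‖ ≤ K * (‖f‖ + ‖g‖) * ‖f - g‖ := by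
  have hsplit : PP f f - PP g g = PP f (f - g) + PP (f - g) g := by
    simp only [map_sub, sub_apply]; abel
  calc ‖PP f f - PP g g‖ ≤ K * ‖f‖ * ‖f - g‖ + K * ‖f - g‖ * ‖g‖ := by
        rw [hsplit]; exact (norm_add_le _ _).trans (add_le_add (hPP _ _) (hPP _ _))
    _ = K * (‖f‖ + ‖g‖) * ‖f - g‖ := by ring

variable (hPP : ∀ f g, ‖PP f g‖ ≤ K * ‖f‖ * ‖g‖) (hK : 0 ≤ K) {B α β d : ℝ} {a b : ℝ → F}
include hPP hK

theorem ExpBound.apply_self (ha : ExpBound B α a) :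
    ExpBound (2 * B) (K * α ^ 2) fun t => PP (a t) (a t) := fun t ht =>
  calc ‖PP (a t) (a t)‖ ≤ K * ‖a t‖ * ‖a t‖ := hPP _ _
    _ ≤ K * (α * Real.exp (-(B * t))) * (α * Real.exp (-(B * t))) := by
        have := ha t ht
        gcongr
        exact mul_nonneg hK (mul_nonneg ha.nonneg (Real.exp_pos _).le)
    _ = K * α ^ 2 * Real.exp (-(2 * B * t)) := by rw [← Real.exp_neg_mul_self]; ring

theorem ExpBound.apply_self_sub (ha : ExpBound B α a) (hb : ExpBound B β b)
    (hab : ExpBound B d (a - b)) :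
    ExpBound (2 * B) (K * (α + β) * d) fun t => PP (a t) (a t) - PP (b t) (b t) := fun t ht =>
  calc ‖PP (a t) (a t) - PP (b t) (b t)‖ ≤ K * (‖a t‖ + ‖b t‖) * ‖a t - b t‖ :=
        norm_apply_self_sub_apply_self_le hPP _ _
    _ ≤ K * (α * Real.exp (-(B * t)) + β * Real.exp (-(B * t))) * (d * Real.exp (-(B * t))) := by
        have := ha t ht; have := hb t ht; have : ‖a t - b t‖ ≤ _ := hab t ht
        gcongr
        have := Real.exp_pos (-(B * t))
        exact mul_nonneg hK (by nlinarith [ha.nonneg, hb.nonneg])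
    _ = K * (α + β) * d * Real.exp (-(2 * B * t)) := by rw [← Real.exp_neg_mul_self]; ring

end Bilinear

def majorant (a c : ℝ) : ℕ → ℝ
  | 0 => 0
  | n + 1 => a * (c + majorant a c n) ^ 2

section Majorant

variable {a c : ℝ}

theorem majorant_nonneg (ha : 0 ≤ a) : ∀ n, 0 ≤ majorant a c n
  | 0 => le_rfl
  | _ + 1 => mul_nonneg ha (sq_nonneg _)

theorem majorant_le (ha : 0 ≤ a) (hc : 0 ≤ c) {h : ℝ} (hh : a * (c + h) ^ 2 ≤ h) :
    ∀ n, majorant a c n ≤ h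
  | 0 => (mul_nonneg ha (sq_nonneg _)).trans hh
  | n + 1 => by
    have := majorant_le ha hc hh n
    have := majorant_nonneg (c := c) ha n
    calc a * (c + majorant a c n) ^ 2 ≤ a * (c + h) ^ 2 := by gcongr
      _ ≤ h := hh

theorem majorant_mono (ha : 0 ≤ a) (hc : 0 ≤ c) : Monotone (majorant a c) := by
  refine monotone_nat_of_le_succ fun n => ?_
  induction n with
  | zero => exact majorant_nonneg ha 1
  | succ n ih =>
    have := majorant_nonneg (c := c) ha n
    change a * (c + majorant a c n) ^ 2 ≤ a * (c + majorant a c (n + 1)) ^ 2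
    gcongr

theorem majorant_succ_succ_sub (n : ℕ) :
    majorant a c (n + 2) - majorant a c (n + 1) =
      a * ((c + majorant a c (n + 1)) + (c + majorant a c n)) *
        (majorant a c (n + 1) - majorant a c n) := by
  simp only [majorant]; ring

end Majorant

noncomputable def chiHat (z : ℝ) : ℝ :=
  if z = 0 then 1 else (1 - z / 2 - Real.sqrt (1 - z)) / (z ^ 2 / 8)

theorem isFixedPt_chiHat {a c : ℝ} (ha : 0 < a) (hc : 0 ≤ c) (hac : 4 * a * c ≤ 1) :
    Function.IsFixedPt (fun h => a * (c + h) ^ 2) (a * c ^ 2 * chiHat (4 * a * c)) := by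
  rcases hc.eq_or_lt with rfl | hc
  · simp [Function.IsFixedPt]
  have hz : 4 * a * c ≠ 0 := by positivity
  have hw := Real.sq_sqrt (by linarith : 0 ≤ 1 - 4 * a * c)
  simp only [Function.IsFixedPt, chiHat, if_neg hz]
  set w := Real.sqrt (1 - 4 * a * c)
  field_simp
  linear_combination 256 * hw

theorem exists_norm_sub_le_of_norm_succ_sub_le {α E : Type*} [NormedAddCommGroup E]
    [CompleteSpace E] {ψ : ℕ → α → E} {H : ℕ → ℝ} {L : ℝ} {w : α → ℝ} {S : Set α}
    (hH : Monotone H) (hL : Tendsto H atTop (𝓝 L)) (hw : ∀ x ∈ S, 0 ≤ w x)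
    (hstep : ∀ n, ∀ x ∈ S, ‖ψ (n + 1) x - ψ n x‖ ≤ (H (n + 1) - H n) * w x) :
    ∃ φ : α → E, ∀ x ∈ S, ∀ n, ‖φ x - ψ n x‖ ≤ (L - H n) * w x := by
  have htele : ∀ x ∈ S, ∀ n m, n ≤ m → ‖ψ m x - ψ n x‖ ≤ (H m - H n) * w x := by
    intro x hx n m hnm
    induction m, hnm using Nat.le_induction with
    | base => simp
    | succ m _ ih =>
      calc ‖ψ (m + 1) x - ψ n x‖ ≤ ‖ψ (m + 1) x - ψ m x‖ + ‖ψ m x - ψ n x‖ :=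
            norm_sub_le_norm_sub_add_norm_sub _ _ _
        _ ≤ (H (m + 1) - H m) * w x + (H m - H n) * w x := add_le_add (hstep m x hx) ih
        _ = (H (m + 1) - H n) * w x := by ring
  have hHL : ∀ n, H n ≤ L := hH.ge_of_tendsto hL
  have hcauchy : ∀ x ∈ S, CauchySeq fun n => ψ n x := by
    intro x hx
    refine cauchySeq_of_le_tendsto_0 (fun N => (L - H N) * w x) (fun n m N hn hm => ?_) ?_
    · wlog hnm : n ≤ m generalizing n m
      · rw [dist_comm]; exact this m n hm hn (le_of_not_ge hnm)
      rw [dist_comm, dist_eq_norm]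
      exact (htele x hx n m hnm).trans
        (mul_le_mul_of_nonneg_right (by linarith [hHL m, hH hn]) (hw x hx))
    · simpa using ((tendsto_const_nhds (x := L)).sub hL).mul_const (w x)
  refine ⟨fun x => limUnder atTop fun n => ψ n x, fun x hx n => ?_⟩
  refine le_of_tendsto (((hcauchy x hx).tendsto_limUnder.sub_const (ψ n x)).norm) ?_
  filter_upwards [eventually_ge_atTop n] with m hm
  exact (htele x hx n m hm).trans (mul_le_mul_of_nonneg_right (by linarith [hHL m]) (hw x hx))

theorem ContinuousOn.of_norm_sub_le {α E : Type*} [TopologicalSpace α]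
    [SeminormedAddCommGroup E] {ψ : ℕ → α → E} {φ : α → E} {S : Set α} {b : ℕ → ℝ}
    (hψ : ∀ n, ContinuousOn (ψ n) S) (hb : Tendsto b atTop (𝓝 0))
    (h : ∀ n, ∀ x ∈ S, ‖φ x - ψ n x‖ ≤ b n) : ContinuousOn φ S := by
  refine TendstoUniformlyOn.continuousOn (F := ψ) (p := atTop) ?_
    (Eventually.of_forall hψ).frequently
  rw [Metric.tendstoUniformlyOn_iff]
  intro ε hε
  filter_upwards [hb.eventually_lt_const hε] with n hn x hx
  rw [dist_eq_norm]
  exact (h n x hx).trans_lt hn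

theorem continuousOn_Ici_of_lipschitz_on_compact {E : Type*} [SeminormedAddCommGroup E]
    {ξ : ℝ → E} (hξ : ∀ C : Set ℝ, IsCompact C → C ⊆ Ici (0:ℝ) →
      ∃ M : ℝ, ∀ t ∈ C, ∀ t' ∈ C, ‖ξ t - ξ t'‖ ≤ M * |t - t'|) :
    ContinuousOn ξ (Ici 0) := by
  intro t ht
  obtain ⟨M, hM⟩ := hξ (Icc 0 (t + 1)) isCompact_Icc Icc_subset_Ici_self
  have hlip : LipschitzOnWith (Real.toNNReal M) ξ (Icc 0 (t + 1)) :=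
    LipschitzOnWith.of_dist_le' fun x hx y hy => by
      simpa [dist_eq_norm, Real.dist_eq] using hM x hx y hy
  refine (hlip.continuousOn t ⟨ht, by linarith⟩).mono_of_mem_nhdsWithin ?_
  rw [← Ici_inter_Iic]
  exact inter_mem_nhdsWithin _ (Iic_mem_nhds (by linarith))

theorem integrableOn_Ioc_of_le_div_rpow {μ : ℝ → ℝ} (hμc : ContinuousOn μ (Ioi 0))
    (hμ0 : ∀ t > 0, 0 ≤ μ t) {σ : ℝ} (hσ : 0 < σ)
    (hO : ∃ C : ℝ, ∃ δ > (0:ℝ), ∀ t ∈ Ioo (0:ℝ) δ, μ t ≤ C / t ^ (1 - σ)) (T : ℝ) :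
    IntegrableOn μ (Ioc 0 T) := by
  obtain ⟨C, δ, hδ, hC⟩ := hO
  rcases le_or_gt T 0 with hT | hT
  · simp [Ioc_eq_empty_of_le hT]
  set η := min (δ / 2) T
  have hη : 0 < η := lt_min (by linarith) hT
  have hnear : IntegrableOn μ (Ioc 0 η) := by
    have hpow : IntegrableOn (fun u => C * u ^ (σ - 1)) (Ioc 0 η) :=
      (intervalIntegrable_iff_integrableOn_Ioc_of_le hη.le).1
        ((intervalIntegral.intervalIntegrable_rpow' (by linarith)).const_mul C)
    refine hpow.mono' ((hμc.mono fun u hu => hu.1).aestronglyMeasurable measurableSet_Ioc) ?_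
    filter_upwards [ae_restrict_mem measurableSet_Ioc] with u ⟨hu0, huη⟩
    have huδ : u < δ := by linarith [min_le_left (δ / 2) T]
    calc ‖μ u‖ = μ u := Real.norm_of_nonneg (hμ0 u hu0)
      _ ≤ C / u ^ (1 - σ) := hC u ⟨hu0, huδ⟩
      _ = C * u ^ (σ - 1) := by rw [div_eq_mul_inv, ← Real.rpow_neg hu0.le, neg_sub]
  have hfar : IntegrableOn μ (Ioc η T) :=
    ((hμc.mono fun u hu => hη.trans_le hu.1).integrableOn_Icc).mono_set Ioc_subset_Icc_self
  simpa [Ioc_union_Ioc_eq_Ioc hη.le (min_le_right _ _)] using hnear.union hfar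

section Duhamel

variable {F Fm : Type*} [NormedAddCommGroup F]

noncomputable def duhamel [NormedSpace ℝ F] (W : ℝ → Fm → F) (g : ℝ → Fm) (t : ℝ) : F :=
  ∫ s in (0:ℝ)..t, W (t - s) (g s)

theorem duhamel_eq_intervalIntegral_indicator [NormedSpace ℝ F] (W : ℝ → Fm → F) (g : ℝ → Fm)
    {t T : ℝ} (ht : 0 ≤ t) (htT : t ≤ T) :
    duhamel W g t = ∫ u in (0:ℝ)..T, (Iio t).indicator (fun u => W u (g (t - u))) u := by
  have hsub : ∫ s in (0:ℝ)..t, W (t - s) (g s) = ∫ u in (0:ℝ)..t, W u (g (t - u)) := by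
    simpa using intervalIntegral.integral_comp_sub_left (fun u => W u (g (t - u))) t
      (a := 0) (b := t)
  have hset : Ioc 0 T ∩ Iio t = Ioo 0 t := by
    ext u; simp only [mem_inter_iff, mem_Ioc, mem_Iio, mem_Ioo]
    constructor
    · rintro ⟨⟨h0, -⟩, hu⟩; exact ⟨h0, hu⟩
    · rintro ⟨h0, hu⟩; exact ⟨⟨h0, by linarith⟩, hu⟩
  rw [duhamel, hsub, intervalIntegral.integral_of_le ht,
    intervalIntegral.integral_of_le (ht.trans htT), setIntegral_indicator measurableSet_Iio,
    hset, integral_Ioc_eq_integral_Ioo]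

variable [NormedAddCommGroup Fm]

/-- `W t` stands for `e^{tA} : F₋ → F` (`t > 0`), smoothing at the rate `μm` (the paper's `μ₋`). -/
structure IsDuhamelKernel (W : ℝ → Fm → F) (μm : ℝ → ℝ) (B N : ℝ) : Prop where
  continuousOn : ContinuousOn (fun p : Fm × ℝ => W p.2 p.1) (univ ×ˢ Ioi 0)
  map_add : ∀ t > (0:ℝ), ∀ f g, W t (f + g) = W t f + W t g
  exponent_nonneg : 0 ≤ B
  weight_nonneg : ∀ t > (0:ℝ), 0 ≤ μm t
  norm_le : ∀ t > (0:ℝ), ∀ f, ‖W t f‖ ≤ μm t * Real.exp (-(B * t)) * ‖f‖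
  integrableOn : ∀ T, IntegrableOn μm (Ioc 0 T)
  integral_le : ∀ t ≥ (0:ℝ), ∫ s in (0:ℝ)..t, μm (t - s) * Real.exp (-(B * s)) ≤ N

namespace IsDuhamelKernel

variable {W : ℝ → Fm → F} {μm : ℝ → ℝ} {B N : ℝ} (hW : IsDuhamelKernel W μm B N)
include hW

theorem map_sub {t : ℝ} (ht : 0 < t) (f g : Fm) : W t (f - g) = W t f - W t g :=
  eq_sub_of_add_eq (by rw [← hW.map_add t ht, sub_add_cancel])

theorem norm_apply_le {t c : ℝ} (ht : 0 < t) {f : Fm} (hf : ‖f‖ ≤ c) : ‖W t f‖ ≤ μm t * c := by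
  have hμ := hW.weight_nonneg t ht
  have hexp : Real.exp (-(B * t)) ≤ 1 :=
    Real.exp_le_one_iff.2 (by nlinarith [hW.exponent_nonneg])
  calc ‖W t f‖ ≤ μm t * Real.exp (-(B * t)) * ‖f‖ := hW.norm_le t ht f
    _ ≤ μm t * 1 * c := by gcongr
    _ = μm t * c := by ring

theorem continuous_apply {t : ℝ} (ht : 0 < t) : Continuous (W t) :=
  continuousOn_univ.1 <| hW.continuousOn.comp (continuousOn_id.prodMk continuousOn_const)
    fun _ _ => ⟨mem_univ _, ht⟩

theorem continuousOn_apply {S : Set ℝ} {τ : ℝ → ℝ} {g : ℝ → Fm} (hτ : ContinuousOn τ S)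
    (hτ0 : ∀ s ∈ S, 0 < τ s) (hg : ContinuousOn g S) :
    ContinuousOn (fun s => W (τ s) (g s)) S :=
  hW.continuousOn.comp (hg.prodMk hτ) fun s hs => ⟨mem_univ _, hτ0 s hs⟩

theorem intervalIntegrable_weight {t : ℝ} (ht : 0 ≤ t) :
    IntervalIntegrable (fun s => μm (t - s)) volume 0 t := by
  have h : IntervalIntegrable μm volume 0 t :=
    (intervalIntegrable_iff_integrableOn_Ioc_of_le ht).2 (hW.integrableOn t)
  simpa using (h.comp_sub_left t).symm

theorem intervalIntegrable {g : ℝ → Fm} {t : ℝ} (ht : 0 ≤ t) (hg : ContinuousOn g (Icc 0 t)) :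
    IntervalIntegrable (fun s => W (t - s) (g s)) volume 0 t := by
  obtain ⟨c, hc⟩ := isCompact_Icc.exists_bound_of_continuousOn hg
  rw [intervalIntegrable_iff_integrableOn_Ioo_of_le ht]
  refine Integrable.mono' ((intervalIntegrable_iff_integrableOn_Ioo_of_le ht).1
    ((hW.intervalIntegrable_weight ht).mul_const c)) ?_ ?_
  · exact (hW.continuousOn_apply (continuousOn_const.sub continuousOn_id)
      (fun s hs => sub_pos.2 hs.2) (hg.mono Ioo_subset_Icc_self)).aestronglyMeasurable
      measurableSet_Ioo
  · filter_upwards [ae_restrict_mem measurableSet_Ioo] with s hs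
    exact hW.norm_apply_le (sub_pos.2 hs.2) (hc s (Ioo_subset_Icc_self hs))

variable [NormedSpace ℝ F]

theorem duhamel_add {g₁ g₂ : ℝ → Fm} {t : ℝ} (ht : 0 ≤ t) (hg₁ : ContinuousOn g₁ (Icc 0 t))
    (hg₂ : ContinuousOn g₂ (Icc 0 t)) :
    duhamel W (fun s => g₁ s + g₂ s) t = duhamel W g₁ t + duhamel W g₂ t := by
  rw [duhamel, duhamel, duhamel,
    ← intervalIntegral.integral_add (hW.intervalIntegrable ht hg₁) (hW.intervalIntegrable ht hg₂)]
  refine intervalIntegral.integral_congr_ae ?_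
  filter_upwards [Measure.ae_ne volume t] with s hst hs
  rw [uIoc_of_le ht] at hs
  exact hW.map_add _ (sub_pos.2 (hs.2.lt_of_ne hst)) _ _

theorem duhamel_sub {g₁ g₂ : ℝ → Fm} {t : ℝ} (ht : 0 ≤ t) (hg₁ : ContinuousOn g₁ (Icc 0 t))
    (hg₂ : ContinuousOn g₂ (Icc 0 t)) :
    duhamel W (fun s => g₁ s - g₂ s) t = duhamel W g₁ t - duhamel W g₂ t := by
  rw [duhamel, duhamel, duhamel,
    ← intervalIntegral.integral_sub (hW.intervalIntegrable ht hg₁) (hW.intervalIntegrable ht hg₂)]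
  refine intervalIntegral.integral_congr_ae ?_
  filter_upwards [Measure.ae_ne volume t] with s hst hs
  rw [uIoc_of_le ht] at hs
  exact hW.map_sub (sub_pos.2 (hs.2.lt_of_ne hst)) _ _

theorem expBound_duhamel {g : ℝ → Fm} {c : ℝ} (hg : ExpBound (2 * B) c g) :
    ExpBound B (c * N) (duhamel W g) := by
  intro t ht
  have hc := hg.nonneg
  have hweight : IntervalIntegrable (fun s => μm (t - s) * Real.exp (-(B * s))) volume 0 t :=
    (hW.intervalIntegrable_weight ht).mul_continuousOn (by fun_prop)
  calc ‖duhamel W g t‖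
      ≤ ∫ s in (0:ℝ)..t, c * Real.exp (-(B * t)) * (μm (t - s) * Real.exp (-(B * s))) := by
        refine intervalIntegral.norm_integral_le_of_norm_le ht ?_ (hweight.const_mul _)
        filter_upwards [Measure.ae_ne volume t] with s hst hs
        have hts : 0 < t - s := sub_pos.2 (hs.2.lt_of_ne hst)
        have hexp : Real.exp (-(B * (t - s))) * Real.exp (-(2 * B * s))
            = Real.exp (-(B * t)) * Real.exp (-(B * s)) := by
          rw [← Real.exp_add, ← Real.exp_add]; ring_nf
        have := hW.weight_nonneg _ hts
        calc ‖W (t - s) (g s)‖ ≤ μm (t - s) * Real.exp (-(B * (t - s))) * ‖g s‖ :=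
              hW.norm_le _ hts _
          _ ≤ μm (t - s) * Real.exp (-(B * (t - s))) * (c * Real.exp (-(2 * B * s))) := by
              gcongr; exact hg s hs.1.le
          _ = c * Real.exp (-(B * t)) * (μm (t - s) * Real.exp (-(B * s))) := by
              linear_combination μm (t - s) * c * hexp
    _ = c * Real.exp (-(B * t)) * ∫ s in (0:ℝ)..t, μm (t - s) * Real.exp (-(B * s)) :=
        intervalIntegral.integral_const_mul _ _
    _ ≤ c * Real.exp (-(B * t)) * N := by gcongr; exact hW.integral_le t ht
    _ = c * N * Real.exp (-(B * t)) := by ring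

theorem continuousOn_duhamel {g : ℝ → Fm} (hg : ContinuousOn g (Ici 0)) :
    ContinuousOn (duhamel W g) (Ici 0) := by
  intro t₀ (ht₀ : 0 ≤ t₀)
  set T := t₀ + 1 with hT
  obtain ⟨c, hc⟩ := isCompact_Icc.exists_bound_of_continuousOn
    (hg.mono (Icc_subset_Ici_self : Icc 0 T ⊆ Ici 0))
  -- after the substitution `u = t - s` the domain of integration no longer moves with `t`
  set G : ℝ → ℝ → F := fun t => (Iio t).indicator fun u => W u (g (t - u))
  have hG : ∀ t ∈ Icc 0 T, duhamel W g t = ∫ u in (0:ℝ)..T, G t u :=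
    fun t ht => duhamel_eq_intervalIntegral_indicator W g ht.1 ht.2
  have hc0 : 0 ≤ c := (norm_nonneg _).trans (hc 0 ⟨le_rfl, by linarith⟩)
  have hcont : ContinuousAt (fun t => ∫ u in (0:ℝ)..T, G t u) t₀ := by
    refine intervalIntegral.continuousAt_of_dominated_interval (bound := fun u => μm u * c)
      (Eventually.of_forall fun t => ?_) ?_ ?_ ?_
    · rw [aestronglyMeasurable_indicator_iff measurableSet_Iio,
        Measure.restrict_restrict measurableSet_Iio]
      refine ContinuousOn.aestronglyMeasurable ?_ (measurableSet_Iio.inter measurableSet_uIoc)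
      exact hW.continuousOn_apply continuousOn_id (fun u hu => by
          rw [uIoc_of_le (by linarith)] at hu; exact hu.2.1)
        (hg.comp (continuousOn_const.sub continuousOn_id) fun u hu =>
          mem_Ici.2 (sub_nonneg.2 (mem_Iio.1 hu.1).le))
    · filter_upwards [Iio_mem_nhds (by linarith : t₀ < T)] with t (htT : t < T)
      refine Eventually.of_forall fun u hu => ?_
      rw [uIoc_of_le (by linarith)] at hu
      by_cases hut : u < t
      · simp only [G, indicator_of_mem (show u ∈ Iio t from hut)]
        exact hW.norm_apply_le hu.1 (hc _ ⟨by linarith, by linarith [hu.1]⟩)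
      · simp only [G, indicator_of_notMem (show u ∉ Iio t from hut), norm_zero]
        exact mul_nonneg (hW.weight_nonneg u hu.1) hc0
    · exact (intervalIntegrable_iff_integrableOn_Ioc_of_le (by linarith)).2
        ((hW.integrableOn T).mul_const c)
    · filter_upwards [Measure.ae_ne volume t₀] with u hut₀ hu
      rw [uIoc_of_le (by linarith)] at hu
      rcases hut₀.lt_or_gt with hlt | hgt
      · have hshift : ContinuousAt (fun t => t - u) t₀ := continuousAt_id.sub continuousAt_const
        refine ((hW.continuous_apply hu.1).continuousAt.comp
          ((hg.continuousAt (Ici_mem_nhds (sub_pos.2 hlt))).comp_of_eq hshift rfl)).congr ?_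
        filter_upwards [Ioi_mem_nhds hlt] with t ht
        simp [G, indicator_of_mem (show u ∈ Iio t from ht)]
      · refine (continuousAt_const (y := (0 : F))).congr ?_
        filter_upwards [Iio_mem_nhds hgt] with t (ht : t < u)
        simp [G, indicator_of_notMem (show u ∉ Iio t from not_lt.2 ht.le)]
  refine hcont.continuousWithinAt.congr_of_eventuallyEq ?_ (hG t₀ ⟨ht₀, by linarith⟩)
  filter_upwards [inter_mem_nhdsWithin (Ici 0) (Iio_mem_nhds (by linarith : t₀ < T))] with t ht
  exact hG t ⟨ht.1, ht.2.le⟩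

end IsDuhamelKernel

end Duhamel

def picardIter {F : Type*} [Add F] (Q : (ℝ → F) → ℝ → F) (φ₀ : ℝ → F) : ℕ → ℝ → F
  | 0 => φ₀
  | n + 1 => fun t => φ₀ t + Q (picardIter Q φ₀ n) t

theorem picardIter_succ_sub_self {F : Type*} [AddCommGroup F] (Q : (ℝ → F) → ℝ → F)
    (φ₀ : ℝ → F) (n : ℕ) : picardIter Q φ₀ (n + 1) - φ₀ = Q (picardIter Q φ₀ n) := by
  ext t; simp [picardIter]

theorem picardIter_succ_succ_sub {F : Type*} [AddCommGroup F] (Q : (ℝ → F) → ℝ → F)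
    (φ₀ : ℝ → F) (n : ℕ) :
    picardIter Q φ₀ (n + 2) - picardIter Q φ₀ (n + 1) =
      Q (picardIter Q φ₀ (n + 1)) - Q (picardIter Q φ₀ n) := by
  ext t; simp [picardIter]

section Picard

variable {F Fm : Type*} [NormedAddCommGroup F] [NormedSpace ℝ F]
  [NormedAddCommGroup Fm] [NormedSpace ℝ Fm]

theorem ContinuousOn.clm_apply_self {X : Type*} [TopologicalSpace X]
    (PP : F →L[ℝ] F →L[ℝ] Fm) {a : X → F} {S : Set X} (ha : ContinuousOn a S) :
    ContinuousOn (fun x => PP (a x) (a x)) S :=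
  (PP.continuous.comp_continuousOn ha).clm_apply ha

noncomputable def quadDuhamel (W : ℝ → Fm → F) (PP : F →L[ℝ] F →L[ℝ] Fm) (a : ℝ → F) :
    ℝ → F :=
  duhamel W fun s => PP (a s) (a s)

namespace IsDuhamelKernel

variable {W : ℝ → Fm → F} {μm : ℝ → ℝ} {B N : ℝ} (hW : IsDuhamelKernel W μm B N)
  {PP : F →L[ℝ] F →L[ℝ] Fm} {K : ℝ}
include hW

theorem continuousOn_quadDuhamel {a : ℝ → F} (ha : ContinuousOn a (Ici 0)) :
    ContinuousOn (quadDuhamel W PP a) (Ici 0) :=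
  hW.continuousOn_duhamel (ha.clm_apply_self PP)

variable (hPP : ∀ f g, ‖PP f g‖ ≤ K * ‖f‖ * ‖g‖) (hK : 0 ≤ K)
include hPP hK

theorem expBound_quadDuhamel {a : ℝ → F} {α : ℝ} (ha : ExpBound B α a) :
    ExpBound B (K * N * α ^ 2) (quadDuhamel W PP a) :=
  (hW.expBound_duhamel (ha.apply_self hPP hK)).mono (le_of_eq (by ring))

theorem expBound_quadDuhamel_sub {a b : ℝ → F} {α β d : ℝ} (hac : ContinuousOn a (Ici 0))
    (hbc : ContinuousOn b (Ici 0)) (ha : ExpBound B α a) (hb : ExpBound B β b)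
    (hab : ExpBound B d (a - b)) :
    ExpBound B (K * N * (α + β) * d) (quadDuhamel W PP a - quadDuhamel W PP b) := by
  intro t ht
  have hac' := hac.mono (Icc_subset_Ici_self : Icc 0 t ⊆ Ici 0)
  have hbc' := hbc.mono (Icc_subset_Ici_self : Icc 0 t ⊆ Ici 0)
  have hsub := hW.duhamel_sub ht (hac'.clm_apply_self PP) (hbc'.clm_apply_self PP)
  rw [Pi.sub_apply, quadDuhamel, quadDuhamel, ← hsub]
  exact ((hW.expBound_duhamel (ha.apply_self_sub hPP hK hb hab)).mono
    (le_of_eq (by ring))) t ht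

theorem eq_add_quadDuhamel_of_expBound_sub {φ₀ φ : ℝ → F} {ψ : ℕ → ℝ → F} {α : ℝ} {γ : ℕ → ℝ}
    (hψ : ∀ n t, ψ (n + 1) t = φ₀ t + quadDuhamel W PP (ψ n) t)
    (hψc : ∀ n, ContinuousOn (ψ n) (Ici 0)) (hφc : ContinuousOn φ (Ici 0))
    (hψb : ∀ n, ExpBound B α (ψ n)) (hφb : ExpBound B α φ) (hγ : Tendsto γ atTop (𝓝 0))
    (hφψ : ∀ n, ExpBound B (γ n) (φ - ψ n)) {t : ℝ} (ht : 0 ≤ t) :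
    φ t = φ₀ t + quadDuhamel W PP φ t := by
  set M := K * N * (α + α)
  have hres : ∀ n, ‖φ t - (φ₀ t + quadDuhamel W PP φ t)‖ ≤
      (γ (n + 1) + M * γ n) * Real.exp (-(B * t)) := by
    intro n
    have hdiff := hW.expBound_quadDuhamel_sub hPP hK (hψc n) hφc (hψb n) hφb
      (fun s hs => by simpa [norm_sub_rev] using hφψ n s hs) t ht
    have hsplit : φ t - (φ₀ t + quadDuhamel W PP φ t) =
        (φ t - ψ (n + 1) t) + (quadDuhamel W PP (ψ n) t - quadDuhamel W PP φ t) := by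
      rw [hψ]; abel
    rw [hsplit, add_mul]
    exact (norm_add_le _ _).trans (add_le_add (hφψ (n + 1) t ht) hdiff)
  have hlim : Tendsto (fun n => (γ (n + 1) + M * γ n) * Real.exp (-(B * t))) atTop (𝓝 0) := by
    simpa using ((hγ.comp (tendsto_add_atTop_nat 1)).add (hγ.const_mul M)).mul_const
      (Real.exp (-(B * t)))
  exact eq_of_sub_eq_zero (norm_le_zero_iff.1 (ge_of_tendsto' hlim hres))

variable {φ₀ : ℝ → F} {c : ℝ} (hφc : ContinuousOn φ₀ (Ici 0)) (hφb : ExpBound B c φ₀)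
include hφc hφb

theorem continuousOn_picardIter_and_expBound (n : ℕ) :
    ContinuousOn (picardIter (quadDuhamel W PP) φ₀ n) (Ici 0) ∧
      ExpBound B (majorant (K * N) c n) (picardIter (quadDuhamel W PP) φ₀ n - φ₀) := by
  induction n with
  | zero => exact ⟨hφc, fun t _ => by simp [picardIter, majorant]⟩
  | succ n ih =>
    obtain ⟨hcont, hbound⟩ := ih
    have hψ : ExpBound B (c + majorant (K * N) c n) (picardIter (quadDuhamel W PP) φ₀ n) := by
      simpa using hφb.add hbound
    refine ⟨hφc.add (hW.continuousOn_quadDuhamel hcont), ?_⟩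
    rw [picardIter_succ_sub_self]
    exact hW.expBound_quadDuhamel hPP hK hψ

theorem expBound_picardIter_succ_sub (n : ℕ) :
    ExpBound B (majorant (K * N) c (n + 1) - majorant (K * N) c n)
      (picardIter (quadDuhamel W PP) φ₀ (n + 1) - picardIter (quadDuhamel W PP) φ₀ n) := by
  induction n with
  | zero =>
    change ExpBound B (majorant (K * N) c 1 - 0) (picardIter (quadDuhamel W PP) φ₀ 1 - φ₀)
    rw [picardIter_succ_sub_self, sub_zero]
    exact (hW.expBound_quadDuhamel hPP hK hφb).mono (le_of_eq (by simp [majorant]))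
  | succ n ih =>
    have h := hW.continuousOn_picardIter_and_expBound hPP hK hφc hφb
    have hψ : ∀ m, ExpBound B (c + majorant (K * N) c m) (picardIter (quadDuhamel W PP) φ₀ m) :=
      fun m => by simpa using hφb.add (h m).2
    have := hW.expBound_quadDuhamel_sub hPP hK (h (n + 1)).1 (h n).1 (hψ (n + 1)) (hψ n) ih
    rw [majorant_succ_succ_sub, picardIter_succ_succ_sub]
    exact this.mono (le_of_eq (by ring))

variable [CompleteSpace F]

theorem exists_solution_of_majorant_le {h : ℝ} (hh : K * N * (c + h) ^ 2 ≤ h) :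
    ∃ φ : ℝ → F, ContinuousOn φ (Ici 0) ∧
      (∀ t ≥ (0:ℝ), φ t = φ₀ t + quadDuhamel W PP φ t) ∧ ExpBound B h (φ - φ₀) := by
  have hN : 0 ≤ N := by simpa using hW.integral_le 0 le_rfl
  have hc := hφb.nonneg
  set H := majorant (K * N) c
  set ψ := picardIter (quadDuhamel W PP) φ₀
  have hψ := hW.continuousOn_picardIter_and_expBound hPP hK hφc hφb
  have hH : Monotone H := majorant_mono (mul_nonneg hK hN) hc
  have hHh : ∀ n, H n ≤ h := majorant_le (mul_nonneg hK hN) hc hh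
  obtain ⟨L, hL⟩ : ∃ L, Tendsto H atTop (𝓝 L) :=
    ⟨_, tendsto_atTop_ciSup hH ⟨h, forall_mem_range.2 hHh⟩⟩
  have hgap : Tendsto (fun n => L - H n) atTop (𝓝 0) := by
    simpa using (tendsto_const_nhds (x := L)).sub hL
  obtain ⟨φ, hφ⟩ := exists_norm_sub_le_of_norm_succ_sub_le (S := Ici 0)
    (w := fun t => Real.exp (-(B * t))) hH hL (fun t _ => (Real.exp_pos _).le)
    (fun n t ht => hW.expBound_picardIter_succ_sub hPP hK hφc hφb n t ht)
  have hφψ : ∀ n, ExpBound B (L - H n) (φ - ψ n) := fun n t ht => hφ t ht n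
  have hφ_near : ExpBound B L (φ - φ₀) := by simpa [H, ψ, picardIter, majorant] using hφψ 0
  have hφ_cont : ContinuousOn φ (Ici 0) := by
    refine ContinuousOn.of_norm_sub_le (fun n => (hψ n).1) hgap fun n t ht => (hφ t ht n).trans ?_
    exact mul_le_of_le_one_right (by linarith [hH.ge_of_tendsto hL n])
      (Real.exp_le_one_iff.2 (by nlinarith [hW.exponent_nonneg, mem_Ici.1 ht]))
  have hψb : ∀ n, ExpBound B (c + L) (ψ n) := fun n => by
    simpa using (hφb.add (hψ n).2).mono (add_le_add_right (hH.ge_of_tendsto hL n) c)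
  refine ⟨φ, hφ_cont, fun t ht => ?_, hφ_near.mono (le_of_tendsto' hL hHh)⟩
  exact hW.eq_add_quadDuhamel_of_expBound_sub hPP hK (fun n t => rfl) (fun n => (hψ n).1) hφ_cont
    hψb (by simpa using hφb.add hφ_near) hgap hφψ ht

end IsDuhamelKernel

end Picard

theorem stmt_9_general
    {F Fm : Type*}
    [NormedAddCommGroup F] [NormedSpace ℝ F] [CompleteSpace F]
    [NormedAddCommGroup Fm] [NormedSpace ℝ Fm]
    -- F is a dense subspace of Fm, with continuous inclusion ι
    (ι : F →L[ℝ] Fm) (hι_inj : Function.Injective ι)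
    -- the semigroup (e^{tA})_{t ≥ 0} on Fm, strongly continuous
    (U : ℝ → Fm →L[ℝ] Fm)
    -- e^{tA} maps F into F (lift V), giving a strongly continuous semigroup on F
    (V : ℝ → F → F)
    (hVcont : ContinuousOn (fun p : F × ℝ => V p.2 p.1) (univ ×ˢ Ici (0:ℝ)))
    -- e^{tA} maps Fm into F for t > 0 (lift W), continuously on Fm × (0,∞)
    (W : ℝ → Fm → F)
    (hW : ∀ t > (0:ℝ), ∀ f : Fm, ι (W t f) = U t f)
    (hWcont : ContinuousOn (fun p : Fm × ℝ => W p.2 p.1) (univ ×ˢ Ioi (0:ℝ)))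
    -- the continuous bilinear map 𝒫 with constant K, and the forcing ξ
    (PP : F →L[ℝ] F →L[ℝ] Fm) (K : ℝ) (hK : 0 < K)
    (hPP : ∀ f g : F, ‖PP f g‖ ≤ K * ‖f‖ * ‖g‖)
    (ξ : ℝ → Fm)
    (hξ : ∀ C : Set ℝ, IsCompact C → C ⊆ Ici (0:ℝ) →
      ∃ M : ℝ, ∀ t ∈ C, ∀ t' ∈ C, ‖ξ t - ξ t'‖ ≤ M * |t - t'|)
    -- constants B, N and the exponential semigroup estimators (P4'), (P5')
    (B N : ℝ) (hB : 0 ≤ B) (hN : 0 < N)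
    (hu_bd : ∀ t ≥ (0:ℝ), ∀ x : F, ‖V t x‖ ≤ Real.exp (-(B * t)) * ‖x‖)
    (μm : ℝ → ℝ)
    (hμm_cont : ContinuousOn μm (Ioi (0:ℝ)))
    (hμm_pos : ∀ t > (0:ℝ), 0 < μm t)
    (hμm_bd : ∀ t > (0:ℝ), ∀ f : Fm, ‖W t f‖ ≤ μm t * Real.exp (-(B * t)) * ‖f‖)
    (σ : ℝ) (hσ : σ ∈ Ioc (0:ℝ) 1)
    (hμm_O : ∃ C : ℝ, ∃ δ > (0:ℝ), ∀ t ∈ Ioo (0:ℝ) δ, μm t ≤ C / t ^ (1 - σ))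
    (hμm_N : ∀ t ≥ (0:ℝ), (∫ s in (0:ℝ)..t, μm (t - s) * Real.exp (-(B * s))) ≤ N)
    -- exponentially decaying forcing
    (J : ℝ)
    (hξb : ∀ t ≥ (0:ℝ), ‖ξ t‖ ≤ J * Real.exp (-(2 * B * t)))
    -- datum, F# and the smallness condition
    (f₀ : F) (Fs : ℝ) (hFs : Fs = ‖f₀‖ + N * J)
    (hcond : 4 * K * N * Fs ≤ 1)
    -- the A-flow approximate solution
    (φap : ℝ → F)
    (hφap : ∀ t ≥ (0:ℝ), φap t = V t f₀ + ∫ s in (0:ℝ)..t, W (t - s) (ξ s))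
    -- the function 𝒳̂
    (XXh : ℝ → ℝ)
    (hXXh : ∀ z : ℝ, XXh z = if z = 0 then 1 else
      (1 - z / 2 - Real.sqrt (1 - z)) / (z ^ 2 / 8)) :
    ∃ φ : ℝ → F, ContinuousOn φ (Ici (0:ℝ)) ∧
      (∀ t ≥ (0:ℝ), φ t = V t f₀ + ∫ s in (0:ℝ)..t, W (t - s) (PP (φ s) (φ s) + ξ s)) ∧
      ∀ t ≥ (0:ℝ), ‖φ t - φap t‖ ≤
        K * N * Fs ^ 2 * XXh (4 * K * N * Fs) * Real.exp (-(B * t)) := by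
  have hker : IsDuhamelKernel W μm B N :=
    { continuousOn := hWcont
      map_add := fun t ht f g => hι_inj (by simp only [map_add, hW t ht])
      exponent_nonneg := hB
      weight_nonneg := fun t ht => (hμm_pos t ht).le
      norm_le := hμm_bd
      integrableOn := integrableOn_Ioc_of_le_div_rpow hμm_cont (fun t ht => (hμm_pos t ht).le)
        hσ.1 hμm_O
      integral_le := hμm_N }
  have hξc : ContinuousOn ξ (Ici 0) := continuousOn_Ici_of_lipschitz_on_compact hξ
  have hφap_c : ContinuousOn φap (Ici 0) :=
    ((hVcont.comp (continuousOn_const.prodMk continuousOn_id) fun t ht => ⟨mem_univ _, ht⟩).add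
      (hker.continuousOn_duhamel hξc)).congr hφap
  have hφap_b : ExpBound B Fs φap := fun t ht => by
    rw [hφap t ht, hFs]
    calc _ ≤ Real.exp (-(B * t)) * ‖f₀‖ + J * N * Real.exp (-(B * t)) :=
          (norm_add_le _ _).trans (add_le_add (hu_bd t ht f₀) (hker.expBound_duhamel hξb t ht))
      _ = (‖f₀‖ + N * J) * Real.exp (-(B * t)) := by ring
  have hFs0 : 0 ≤ Fs := hφap_b.nonneg
  have hz : 4 * K * N * Fs = 4 * (K * N) * Fs := by ring
  have hfix := isFixedPt_chiHat (mul_pos hK hN) hFs0 (hz ▸ hcond)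
  obtain ⟨φ, hφc, hφeq, hφb⟩ :=
    hker.exists_solution_of_majorant_le hPP hK.le hφap_c hφap_b hfix.eq.le
  refine ⟨φ, hφc, fun t ht => ?_, fun t ht => ?_⟩
  · have hsum := hker.duhamel_add ht ((hφc.mono Icc_subset_Ici_self).clm_apply_self PP)
      (hξc.mono Icc_subset_Ici_self)
    rw [hφeq t ht, hφap t ht]
    change V t f₀ + duhamel W ξ t + duhamel W (fun s => PP (φ s) (φ s)) t =
      V t f₀ + duhamel W (fun s => PP (φ s) (φ s) + ξ s) t
    rw [hsum]; abel
  · rw [(funext hXXh : XXh = chiHat), hz]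
    exact hφb t ht

/-- The "A-flow" approximate solution: with exponentially decaying forcing, `F# = ‖f₀‖+NJ`
and `4KN F# ≤ 1`, the global solution `φ` of `VP(f₀)` satisfies
`‖φ(t) − φ_ap(t)‖ ≤ KN F#² 𝒳̂(4KN F#) e^{−Bt}`, where `φ_ap` is the flow of the linear
equation `φ̇ = Aφ + ξ(t)`. -/
theorem stmt_9
    {F Fm : Type*}
    [NormedAddCommGroup F] [NormedSpace ℝ F] [CompleteSpace F]
    [NormedAddCommGroup Fm] [NormedSpace ℝ Fm] [CompleteSpace Fm]
    -- F is a dense subspace of Fm, with continuous inclusion ι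
    (ι : F →L[ℝ] Fm) (hι_inj : Function.Injective ι) (hι_dense : DenseRange ι)
    -- the semigroup (e^{tA})_{t ≥ 0} on Fm, strongly continuous
    (U : ℝ → Fm →L[ℝ] Fm)
    (hU0 : U 0 = ContinuousLinearMap.id ℝ Fm)
    (hUsem : ∀ s ≥ (0:ℝ), ∀ t ≥ (0:ℝ), U (s + t) = (U s).comp (U t))
    (hUsc : ∀ f : Fm, ContinuousOn (fun t => U t f) (Ici (0:ℝ)))
    -- e^{tA} maps F into F (lift V), giving a strongly continuous semigroup on F
    (V : ℝ → F → F)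
    (hV : ∀ t ≥ (0:ℝ), ∀ x : F, ι (V t x) = U t (ι x))
    (hVcont : ContinuousOn (fun p : F × ℝ => V p.2 p.1) (univ ×ˢ Ici (0:ℝ)))
    -- e^{tA} maps Fm into F for t > 0 (lift W), continuously on Fm × (0,∞)
    (W : ℝ → Fm → F)
    (hW : ∀ t > (0:ℝ), ∀ f : Fm, ι (W t f) = U t f)
    (hWcont : ContinuousOn (fun p : Fm × ℝ => W p.2 p.1) (univ ×ˢ Ioi (0:ℝ)))
    -- the continuous bilinear map 𝒫 with constant K, and the forcing ξ
    (PP : F →L[ℝ] F →L[ℝ] Fm) (K : ℝ) (hK : 0 < K)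
    (hPP : ∀ f g : F, ‖PP f g‖ ≤ K * ‖f‖ * ‖g‖)
    (ξ : ℝ → Fm)
    (hξ : ∀ C : Set ℝ, IsCompact C → C ⊆ Ici (0:ℝ) →
      ∃ M : ℝ, ∀ t ∈ C, ∀ t' ∈ C, ‖ξ t - ξ t'‖ ≤ M * |t - t'|)
    -- constants B, N and the exponential semigroup estimators (P4'), (P5')
    (B N : ℝ) (hB : 0 ≤ B) (hN : 0 < N)
    (hu_bd : ∀ t ≥ (0:ℝ), ∀ x : F, ‖V t x‖ ≤ Real.exp (-(B * t)) * ‖x‖)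
    (μm : ℝ → ℝ)
    (hμm_cont : ContinuousOn μm (Ioi (0:ℝ)))
    (hμm_pos : ∀ t > (0:ℝ), 0 < μm t)
    (hμm_bd : ∀ t > (0:ℝ), ∀ f : Fm, ‖W t f‖ ≤ μm t * Real.exp (-(B * t)) * ‖f‖)
    (σ : ℝ) (hσ : σ ∈ Ioc (0:ℝ) 1)
    (hμm_O : ∃ C : ℝ, ∃ δ > (0:ℝ), ∀ t ∈ Ioo (0:ℝ) δ, μm t ≤ C / t ^ (1 - σ))
    (hμm_N : ∀ t ≥ (0:ℝ), (∫ s in (0:ℝ)..t, μm (t - s) * Real.exp (-(B * s))) ≤ N)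
    -- exponentially decaying forcing
    (J : ℝ) (hJ : 0 ≤ J)
    (hξb : ∀ t ≥ (0:ℝ), ‖ξ t‖ ≤ J * Real.exp (-(2 * B * t)))
    -- datum, F# and the smallness condition
    (f₀ : F) (Fs : ℝ) (hFs : Fs = ‖f₀‖ + N * J)
    (hcond : 4 * K * N * Fs ≤ 1)
    -- the A-flow approximate solution
    (φap : ℝ → F)
    (hφap : ∀ t ≥ (0:ℝ), φap t = V t f₀ + ∫ s in (0:ℝ)..t, W (t - s) (ξ s))
    -- the function 𝒳̂
    (XXh : ℝ → ℝ)
    (hXXh : ∀ z : ℝ, XXh z = if z = 0 then 1 else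
      (1 - z / 2 - Real.sqrt (1 - z)) / (z ^ 2 / 8)) :
    ∃ φ : ℝ → F, ContinuousOn φ (Ici (0:ℝ)) ∧
      (∀ t ≥ (0:ℝ), φ t = V t f₀ + ∫ s in (0:ℝ)..t, W (t - s) (PP (φ s) (φ s) + ξ s)) ∧
      ∀ t ≥ (0:ℝ), ‖φ t - φap t‖ ≤
        K * N * Fs ^ 2 * XXh (4 * K * N * Fs) * Real.exp (-(B * t)) :=
  stmt_9_general ι hι_inj U V hVcont W hW hWcont PP K hK hPP ξ hξ B N hB hN hu_bd μm hμm_cont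
    hμm_pos hμm_bd σ hσ hμm_O hμm_N J hξb f₀ Fs hFs hcond φap hφap XXh hXXh
end

section
/- For all families v = (v_k)_{k∈ℤ^d}, w = (w_k)_{k∈ℤ^d} of vectors in ℂ^d with ‖v‖_n < ∞ and ‖w‖_n < ∞, the series defining (v·∂w)_k := i(2π)^{−d/2} ∑_{h∈ℤ^d} (v_h·(k−h)) w_{k−h} converges absolutely for every k ∈ ℤ^d, and ∑_{k∈ℤ^d} (1+|k|²)^{n−1} |(v·∂w)_k|² ≤ (sup_{k∈ℤ^d} 𝒦_n(k)) · ‖v‖_n² ‖w‖_n². In particular, for any constant K_n with √(sup_{k∈ℤ^d} 𝒦_n(k)) ≤ K_n, one has ‖v·∂w‖_{n−1} ≤ K_n ‖v‖_n ‖w‖_n. -/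
/-!
By Cauchy–Schwarz in `h`, `|∑_h (v_h·(k-h)) w_{k-h}|²` is at most
`(∑_h ⟨h⟩^{2n}|v_h|² ⟨k-h⟩^{2n}|w_{k-h}|²) · ∑_h |k-h|² ⟨h⟩^{-2n} ⟨k-h⟩^{-2n}`, where
`⟨h⟩² = 1 + |h|²`. After the weight `⟨k⟩^{2(n-1)} / (2π)^d` the second factor becomes
`𝒦_n(k)`, while the first is a convolution whose sum over `k` is `‖v‖_n² ‖w‖_n²`.
Summability of the left-hand side needs `sup_k 𝒦_n(k) < ∞`: from `⟨k⟩² ≤ 4 max(⟨h⟩², ⟨k-h⟩²)`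
and `n ≥ 1`, the `h`-th term of `(2π)^d 𝒦_n(k)` is at most `4^{n-1}(⟨h⟩^{-2n} + ⟨k-h⟩^{-2n})`,
and `∑_h ⟨h⟩^{-2n} < ∞` for `n > d/2` by comparison with `∏_i (1 + h_i²)^{-n/d}`.
-/

open Set

/-- The Euclidean norm of a lattice point `h ∈ ℤ^d`. -/
noncomputable def znorm {d : ℕ} (h : Fin d → ℤ) : ℝ :=
  Real.sqrt (∑ i, ((h i : ℝ)) ^ 2)

/-- The squared Euclidean norm of a vector `c ∈ ℂ^d`. -/
noncomputable def cnorm2 {d : ℕ} (c : Fin d → ℂ) : ℝ :=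
  ∑ r, ‖c r‖ ^ 2

open Finset

theorem summable_prod_apply_of_nonneg {ι α : Type*} [Fintype ι]
    {f : ι → α → ℝ} (hf0 : ∀ i a, 0 ≤ f i a) (hf : ∀ i, Summable (f i)) :
    Summable fun x : ι → α => ∏ i, f i (x i) := by
  classical
  refine summable_of_sum_le (c := ∏ i, ∑' a, f i a)
    (fun x => prod_nonneg fun i _ => hf0 i (x i)) fun u => ?_
  calc ∑ x ∈ u, ∏ i, f i (x i)
      ≤ ∑ x ∈ Fintype.piFinset fun i => u.image (· i), ∏ i, f i (x i) :=
        sum_le_sum_of_subset_of_nonneg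
          (fun x hx => Fintype.mem_piFinset.2 fun i => mem_image_of_mem _ hx)
          fun x _ _ => prod_nonneg fun i _ => hf0 i (x i)
    _ = ∏ i, ∑ a ∈ u.image (· i), f i a := (prod_univ_sum _ _).symm
    _ ≤ ∏ i, ∑' a, f i a :=
        prod_le_prod (fun i _ => sum_nonneg fun a _ => hf0 i a)
          fun i _ => (hf i).sum_le_tsum _ fun a _ => hf0 i a

theorem summable_one_add_intCast_sq_rpow_neg {p : ℝ} (hp : 1 / 2 < p) :
    Summable fun m : ℤ => (1 + (m : ℝ) ^ 2) ^ (-p) := by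
  refine (Real.summable_abs_int_rpow (b := 2 * p) (by linarith)).of_norm_bounded_eventually ?_
  filter_upwards [Filter.eventually_cofinite_ne 0] with m hm
  have hm2 : 0 < (m : ℝ) ^ 2 := by positivity
  have habs : |(m : ℝ)| ^ (-(2 * p)) = ((m : ℝ) ^ 2) ^ (-p) := by
    rw [← sq_abs, ← Real.rpow_two, ← Real.rpow_mul (abs_nonneg _)]
    ring_nf
  rw [Real.norm_of_nonneg (by positivity), habs]
  exact Real.rpow_le_rpow_of_nonpos hm2 (by linarith) (by linarith)

theorem summable_norm_and_norm_tsum_le_of_le_sqrt_mul_sqrt {ι E : Type*}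
    [SeminormedAddCommGroup E] {a : ι → E} {u s : ι → ℝ}
    (hu0 : ∀ i, 0 ≤ u i) (hs0 : ∀ i, 0 ≤ s i) (hu : Summable u) (hs : Summable s)
    (ha : ∀ i, ‖a i‖ ≤ √(u i) * √(s i)) :
    Summable (fun i => ‖a i‖) ∧ ‖∑' i, a i‖ ≤ √(∑' i, u i) * √(∑' i, s i) := by
  have hfin (F : Finset ι) : ∑ i ∈ F, ‖a i‖ ≤ √(∑' i, u i) * √(∑' i, s i) :=
    calc ∑ i ∈ F, ‖a i‖ ≤ ∑ i ∈ F, √(u i) * √(s i) := sum_le_sum fun i _ => ha i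
      _ ≤ √(∑ i ∈ F, u i) * √(∑ i ∈ F, s i) := Real.sum_sqrt_mul_sqrt_le F hu0 hs0
      _ ≤ √(∑' i, u i) * √(∑' i, s i) := by
        gcongr
        · exact hu.sum_le_tsum F fun i _ => hu0 i
        · exact hs.sum_le_tsum F fun i _ => hs0 i
  have hsum : Summable (fun i => ‖a i‖) := summable_of_sum_le (fun i => norm_nonneg _) hfin
  exact ⟨hsum, (norm_tsum_le_tsum_norm hsum).trans (hsum.tsum_le_of_sum_le hfin)⟩

section Convolution

variable {G : Type*} [AddCommGroup G] {f g : G → ℝ}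

theorem summable_mul_sub_of_nonneg (hf : Summable f) (hg : Summable g)
    (hf0 : ∀ h, 0 ≤ f h) (hg0 : ∀ h, 0 ≤ g h) (k : G) :
    Summable fun h => f h * g (k - h) :=
  (hf.mul_right (∑' m, g m)).of_nonneg_of_le (fun h => mul_nonneg (hf0 h) (hg0 _))
    fun h => mul_le_mul_of_nonneg_left (hg.le_tsum _ fun m _ => hg0 m) (hf0 h)

theorem hasSum_tsum_mul_sub_of_nonneg (hf : Summable f) (hg : Summable g)
    (hf0 : ∀ h, 0 ≤ f h) (hg0 : ∀ h, 0 ≤ g h) :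
    HasSum (fun k => ∑' h, f h * g (k - h)) ((∑' h, f h) * ∑' h, g h) := by
  have hfg : Summable fun p : G × G => f p.1 * g p.2 :=
    hf.mul_of_nonneg hg hf0 hg0
  let e : G × G ≃ G × G :=
    (Equiv.prodComm G G).trans (Equiv.prodShear (Equiv.refl G) fun h => Equiv.subRight h)
  have he : Summable fun p : G × G => f p.2 * g (p.1 - p.2) :=
    e.summable_iff.2 hfg
  rw [hf.tsum_mul_tsum hg hfg, ← e.tsum_eq]
  exact he.hasSum.prod_fiberwise fun k => (summable_mul_sub_of_nonneg hf hg hf0 hg0 k).hasSum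

end Convolution

theorem rpow_sub_one_mul_div_le {n x y z t : ℝ} (hn : 1 ≤ n) (hx : 0 < x) (hy : 0 < y)
    (hz : 0 ≤ z) (hzxy : z ≤ 4 * max x y) (ht : 0 ≤ t) (hty : t ≤ y) :
    z ^ (n - 1) * (t / (x ^ n * y ^ n)) ≤ 4 ^ (n - 1) * (x ^ (-n) + y ^ (-n)) := by
  have hm : 0 < min x y := lt_min hx hy
  have hM : 0 < max x y := lt_max_of_lt_left hx
  have hxy : x ^ n * y ^ n = max x y ^ n * min x y ^ n := by
    rw [← Real.mul_rpow hx.le hy.le, ← Real.mul_rpow hM.le hm.le, max_mul_min]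
  calc z ^ (n - 1) * (t / (x ^ n * y ^ n))
      ≤ (4 * max x y) ^ (n - 1) * (max x y / (max x y ^ n * min x y ^ n)) := by
        rw [hxy]
        gcongr
        exact hty.trans (le_max_right x y)
    _ = 4 ^ (n - 1) * min x y ^ (-n) := by
        rw [Real.mul_rpow (by norm_num) hM.le, Real.rpow_sub_one hM.ne', Real.rpow_neg hm.le]
        field_simp
    _ ≤ 4 ^ (n - 1) * (x ^ (-n) + y ^ (-n)) := by
        gcongr
        have := Real.rpow_nonneg hx.le (-n)
        have := Real.rpow_nonneg hy.le (-n)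
        rcases min_choice x y with h | h <;> rw [h] <;> linarith

section Lattice

variable {d : ℕ}

theorem znorm_nonneg (h : Fin d → ℤ) : 0 ≤ znorm h := Real.sqrt_nonneg _

theorem znorm_sq (h : Fin d → ℤ) : znorm h ^ 2 = ∑ i, ((h i : ℝ)) ^ 2 :=
  Real.sq_sqrt (by positivity)

theorem znorm_eq_norm (h : Fin d → ℤ) :
    znorm h = ‖(WithLp.toLp 2 fun i => (h i : ℝ) : EuclideanSpace ℝ (Fin d))‖ := by
  simp only [znorm, EuclideanSpace.norm_eq, Real.norm_eq_abs, sq_abs]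

theorem znorm_add_le (a b : Fin d → ℤ) : znorm (a + b) ≤ znorm a + znorm b := by
  simp only [znorm_eq_norm, Pi.add_apply, Int.cast_add]
  exact norm_add_le (WithLp.toLp 2 fun i => (a i : ℝ) : EuclideanSpace ℝ (Fin d))
    (WithLp.toLp 2 fun i => (b i : ℝ))

theorem one_add_znorm_sq_le (k h : Fin d → ℤ) :
    1 + znorm k ^ 2 ≤ 4 * max (1 + znorm h ^ 2) (1 + znorm (k - h) ^ 2) := by
  have htri : znorm k ≤ znorm h + znorm (k - h) := by
    simpa using znorm_add_le h (k - h)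
  have := znorm_nonneg k
  have := znorm_nonneg h
  have := znorm_nonneg (k - h)
  rcases le_total (znorm h) (znorm (k - h)) with hc | hc
  · rw [max_eq_right (by nlinarith)]; nlinarith
  · rw [max_eq_left (by nlinarith)]; nlinarith

theorem cnorm2_nonneg (c : Fin d → ℂ) : 0 ≤ cnorm2 c := by
  unfold cnorm2; positivity

theorem cnorm2_smul (a : ℂ) (c : Fin d → ℂ) : cnorm2 (a • c) = ‖a‖ ^ 2 * cnorm2 c := by
  simp only [cnorm2, mul_sum, Pi.smul_apply, smul_eq_mul, norm_mul, mul_pow]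

theorem norm_toLp_eq_sqrt_cnorm2 (c : Fin d → ℂ) :
    ‖(WithLp.toLp 2 c : EuclideanSpace ℂ (Fin d))‖ = √(cnorm2 c) := by
  rw [EuclideanSpace.norm_eq]; rfl

theorem norm_sum_mul_intCast_le (c : Fin d → ℂ) (m : Fin d → ℤ) :
    ‖∑ r, c r * (m r : ℂ)‖ ≤ √(cnorm2 c) * znorm m := by
  calc ‖∑ r, c r * (m r : ℂ)‖ ≤ ∑ r, ‖c r‖ * |(m r : ℝ)| := by
        refine (norm_sum_le _ _).trans_eq (sum_congr rfl fun r _ => ?_)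
        rw [norm_mul, Complex.norm_intCast]
    _ ≤ √(∑ r, ‖c r‖ ^ 2) * √(∑ r, |(m r : ℝ)| ^ 2) := Real.sum_mul_le_sqrt_mul_sqrt _ _ _
    _ = √(cnorm2 c) * znorm m := by simp only [sq_abs, cnorm2, znorm]

theorem summable_one_add_znorm_sq_rpow_neg {n : ℝ} (hn : (d : ℝ) / 2 < n) :
    Summable fun h : Fin d → ℤ => (1 + znorm h ^ 2) ^ (-n) := by
  rcases Nat.eq_zero_or_pos d with rfl | hd
  · exact .of_finite
  have hd' : (0 : ℝ) < d := by exact_mod_cast hd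
  have hq : 1 / 2 < n / d := by rw [lt_div_iff₀ hd']; linarith
  refine (summable_prod_apply_of_nonneg (fun _ _ => by positivity)
    fun _ => summable_one_add_intCast_sq_rpow_neg hq).of_nonneg_of_le (fun _ => by positivity)
    fun h => ?_
  have hQ : (1 + znorm h ^ 2) ^ (-n) = ∏ _i : Fin d, (1 + znorm h ^ 2) ^ (-(n / d)) := by
    rw [prod_const, card_univ, Fintype.card_fin, ← Real.rpow_natCast _ d,
      ← Real.rpow_mul (by positivity)]
    field_simp
  rw [hQ]
  refine prod_le_prod (fun _ _ => by positivity) fun i _ =>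
    Real.rpow_le_rpow_of_nonpos (by positivity) ?_ (by linarith)
  rw [znorm_sq]
  gcongr
  exact single_le_sum (f := fun j => ((h j : ℝ)) ^ 2) (fun j _ => by positivity) (mem_univ i)

end Lattice

section SobolevKernel

variable {d : ℕ}

-- `sobolevKernel n k` is the paper's `𝒦_n(k)`.
noncomputable def sobolevKernelTerm (n : ℝ) (k h : Fin d → ℤ) : ℝ :=
  znorm (k - h) ^ 2 / ((1 + znorm h ^ 2) ^ n * (1 + znorm (k - h) ^ 2) ^ n)

noncomputable def sobolevKernel (n : ℝ) (k : Fin d → ℤ) : ℝ :=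
  (1 + znorm k ^ 2) ^ (n - 1) / (2 * Real.pi) ^ d * ∑' h, sobolevKernelTerm n k h

theorem sobolevKernelTerm_nonneg (n : ℝ) (k h : Fin d → ℤ) : 0 ≤ sobolevKernelTerm n k h := by
  unfold sobolevKernelTerm; positivity

variable {n : ℝ}

theorem one_add_znorm_sq_rpow_mul_sobolevKernelTerm_le (hn1 : 1 ≤ n) (k h : Fin d → ℤ) :
    (1 + znorm k ^ 2) ^ (n - 1) * sobolevKernelTerm n k h ≤
      4 ^ (n - 1) * ((1 + znorm h ^ 2) ^ (-n) + (1 + znorm (k - h) ^ 2) ^ (-n)) :=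
  rpow_sub_one_mul_div_le hn1 (by positivity) (by positivity) (by positivity)
    (one_add_znorm_sq_le k h) (by positivity) (by linarith)

theorem hasSum_one_add_znorm_sq_rpow_neg_add_sub (hn : (d : ℝ) / 2 < n) (k : Fin d → ℤ) :
    HasSum (fun h => (1 + znorm h ^ 2) ^ (-n) + (1 + znorm (k - h) ^ 2) ^ (-n))
      (2 * ∑' h : Fin d → ℤ, (1 + znorm h ^ 2) ^ (-n)) := by
  have hT := (summable_one_add_znorm_sq_rpow_neg hn).hasSum
  rw [two_mul]
  exact hT.add ((Equiv.subLeft k).hasSum_iff.2 hT)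

theorem summable_sobolevKernelTerm (hn : (d : ℝ) / 2 < n) (hn1 : 1 ≤ n) (k : Fin d → ℤ) :
    Summable (sobolevKernelTerm n k) := by
  refine ((hasSum_one_add_znorm_sq_rpow_neg_add_sub hn k).summable.mul_left
    (4 ^ (n - 1))).of_nonneg_of_le (sobolevKernelTerm_nonneg n k) fun h =>
      le_trans ?_ (one_add_znorm_sq_rpow_mul_sobolevKernelTerm_le hn1 k h)
  refine le_mul_of_one_le_left (sobolevKernelTerm_nonneg n k h) (Real.one_le_rpow ?_ ?_)
  · nlinarith [znorm_nonneg k]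
  · linarith

theorem bddAbove_range_sobolevKernel (hn : (d : ℝ) / 2 < n) (hn1 : 1 ≤ n) :
    BddAbove (range (sobolevKernel (d := d) n)) := by
  set T := ∑' h : Fin d → ℤ, (1 + znorm h ^ 2) ^ (-n)
  refine ⟨4 ^ (n - 1) * (2 * T) / (2 * Real.pi) ^ d, forall_mem_range.2 fun k => ?_⟩
  have hmaj := hasSum_one_add_znorm_sq_rpow_neg_add_sub hn k
  have hle : (1 + znorm k ^ 2) ^ (n - 1) * ∑' h, sobolevKernelTerm n k h ≤
      4 ^ (n - 1) * (2 * T) := by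
    rw [← tsum_mul_left, ← hmaj.tsum_eq, ← tsum_mul_left]
    exact ((summable_sobolevKernelTerm hn hn1 k).mul_left _).tsum_le_tsum
      (one_add_znorm_sq_rpow_mul_sobolevKernelTerm_le hn1 k) (hmaj.summable.mul_left _)
  rw [sobolevKernel, div_mul_eq_mul_div]
  gcongr

end SobolevKernel

section Advection

variable {d : ℕ}

-- `∑' k, sobolevTerm n v k` is `‖v‖_n²`, and `advectionCoeff v w k` is `(v·∂w)_k`.
noncomputable def sobolevTerm (n : ℝ) (v : (Fin d → ℤ) → Fin d → ℂ) (k : Fin d → ℤ) : ℝ :=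
  (1 + znorm k ^ 2) ^ n * cnorm2 (v k)

noncomputable def advectionTerm (v w : (Fin d → ℤ) → Fin d → ℂ) (k h : Fin d → ℤ) :
    Fin d → ℂ :=
  (∑ r, v h r * (((k - h) r : ℤ) : ℂ)) • w (k - h)

noncomputable def advectionCoeff (v w : (Fin d → ℤ) → Fin d → ℂ) (k : Fin d → ℤ) : Fin d → ℂ :=
  (Complex.I / Complex.ofReal ((2 * Real.pi) ^ ((d : ℝ) / 2))) • ∑' h, advectionTerm v w k h

theorem sobolevTerm_nonneg (n : ℝ) (v : (Fin d → ℤ) → Fin d → ℂ) (k : Fin d → ℤ) :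
    0 ≤ sobolevTerm n v k := by
  unfold sobolevTerm; have := cnorm2_nonneg (v k); positivity

theorem cnorm2_advectionTerm_le (n : ℝ) (v w : (Fin d → ℤ) → Fin d → ℂ) (k h : Fin d → ℤ) :
    cnorm2 (advectionTerm v w k h) ≤
      sobolevTerm n v h * sobolevTerm n w (k - h) * sobolevKernelTerm n k h := by
  have hdot := norm_sum_mul_intCast_le (v h) (k - h)
  have hw := cnorm2_nonneg (w (k - h))
  have hv : √(cnorm2 (v h)) ^ 2 = cnorm2 (v h) := Real.sq_sqrt (cnorm2_nonneg _)
  calc cnorm2 (advectionTerm v w k h)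
      = ‖∑ r, v h r * (((k - h) r : ℤ) : ℂ)‖ ^ 2 * cnorm2 (w (k - h)) := cnorm2_smul _ _
    _ ≤ (√(cnorm2 (v h)) * znorm (k - h)) ^ 2 * cnorm2 (w (k - h)) := by gcongr
    _ = sobolevTerm n v h * sobolevTerm n w (k - h) * sobolevKernelTerm n k h := by
        simp only [sobolevTerm, sobolevKernelTerm]
        field_simp
        rw [hv]
        ring

variable {n : ℝ} {v w : (Fin d → ℤ) → Fin d → ℂ}

theorem summable_advectionTerm_and_cnorm2_tsum_le (hn : (d : ℝ) / 2 < n) (hn1 : 1 ≤ n)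
    (hv : Summable (sobolevTerm n v)) (hw : Summable (sobolevTerm n w)) (k : Fin d → ℤ) :
    Summable (fun h => √(cnorm2 (advectionTerm v w k h))) ∧
      cnorm2 (∑' h, advectionTerm v w k h) ≤
        (∑' h, sobolevTerm n v h * sobolevTerm n w (k - h)) * ∑' h, sobolevKernelTerm n k h := by
  let toE : (Fin d → ℂ) ≃L[ℂ] EuclideanSpace ℂ (Fin d) := (PiLp.continuousLinearEquiv 2 ℂ _).symm
  have hu0 h : 0 ≤ sobolevTerm n v h * sobolevTerm n w (k - h) :=
    mul_nonneg (sobolevTerm_nonneg n v h) (sobolevTerm_nonneg n w _)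
  obtain ⟨hsum, hle⟩ := summable_norm_and_norm_tsum_le_of_le_sqrt_mul_sqrt
    (a := fun h => toE (advectionTerm v w k h)) hu0 (sobolevKernelTerm_nonneg n k)
    (summable_mul_sub_of_nonneg hv hw (sobolevTerm_nonneg n v) (sobolevTerm_nonneg n w) k)
    (summable_sobolevKernelTerm hn hn1 k) fun h => by
      rw [← Real.sqrt_mul (hu0 h)]
      exact (norm_toLp_eq_sqrt_cnorm2 _).trans_le
        (Real.sqrt_le_sqrt (cnorm2_advectionTerm_le n v w k h))
  rw [← toE.map_tsum] at hle
  simp only [toE, PiLp.coe_symm_continuousLinearEquiv, norm_toLp_eq_sqrt_cnorm2] at hsum hle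
  refine ⟨hsum, ?_⟩
  rw [← Real.sqrt_mul (tsum_nonneg hu0), Real.sqrt_le_sqrt_iff] at hle
  · exact hle
  · exact mul_nonneg (tsum_nonneg hu0) (tsum_nonneg (sobolevKernelTerm_nonneg n k))

theorem norm_sq_advection_prefactor :
    ‖Complex.I / Complex.ofReal ((2 * Real.pi) ^ ((d : ℝ) / 2))‖ ^ 2 = 1 / (2 * Real.pi) ^ d := by
  rw [norm_div, Complex.norm_I, Complex.norm_real, Real.norm_of_nonneg (by positivity), div_pow,
    one_pow, ← Real.rpow_natCast _ 2, ← Real.rpow_mul (by positivity)]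
  norm_num

theorem sobolevTerm_advectionCoeff_le (hn : (d : ℝ) / 2 < n) (hn1 : 1 ≤ n)
    (hv : Summable (sobolevTerm n v)) (hw : Summable (sobolevTerm n w)) (k : Fin d → ℤ) :
    sobolevTerm (n - 1) (advectionCoeff v w) k ≤
      sobolevKernel n k * ∑' h, sobolevTerm n v h * sobolevTerm n w (k - h) := by
  have hle := (summable_advectionTerm_and_cnorm2_tsum_le hn hn1 hv hw k).2
  rw [sobolevTerm, advectionCoeff, cnorm2_smul, norm_sq_advection_prefactor, sobolevKernel]
  calc (1 + znorm k ^ 2) ^ (n - 1) * (1 / (2 * Real.pi) ^ d * cnorm2 (∑' h, advectionTerm v w k h))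
      ≤ (1 + znorm k ^ 2) ^ (n - 1) * (1 / (2 * Real.pi) ^ d *
          ((∑' h, sobolevTerm n v h * sobolevTerm n w (k - h)) *
            ∑' h, sobolevKernelTerm n k h)) := by gcongr
    _ = _ := by ring

theorem sobolevTerm_advectionCoeff_le_of_sobolevKernel_le (hn : (d : ℝ) / 2 < n) (hn1 : 1 ≤ n)
    (hv : Summable (sobolevTerm n v)) (hw : Summable (sobolevTerm n w)) {S : ℝ}
    (hS : ∀ k : Fin d → ℤ, sobolevKernel n k ≤ S) (k : Fin d → ℤ) :
    sobolevTerm (n - 1) (advectionCoeff v w) k ≤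
      S * ∑' h, sobolevTerm n v h * sobolevTerm n w (k - h) :=
  (sobolevTerm_advectionCoeff_le hn hn1 hv hw k).trans <| mul_le_mul_of_nonneg_right (hS k) <|
    tsum_nonneg fun h => mul_nonneg (sobolevTerm_nonneg n v h) (sobolevTerm_nonneg n w _)

theorem summable_sobolevTerm_advectionCoeff (hn : (d : ℝ) / 2 < n) (hn1 : 1 ≤ n)
    (hv : Summable (sobolevTerm n v)) (hw : Summable (sobolevTerm n w)) :
    Summable (sobolevTerm (n - 1) (advectionCoeff v w)) := by
  obtain ⟨C, hC⟩ := bddAbove_range_sobolevKernel (d := d) hn hn1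
  exact ((hasSum_tsum_mul_sub_of_nonneg hv hw (sobolevTerm_nonneg n v)
    (sobolevTerm_nonneg n w)).summable.mul_left C).of_nonneg_of_le
      (sobolevTerm_nonneg _ _) <|
    sobolevTerm_advectionCoeff_le_of_sobolevKernel_le hn hn1 hv hw fun k => hC ⟨k, rfl⟩

theorem tsum_sobolevTerm_advectionCoeff_le (hn : (d : ℝ) / 2 < n) (hn1 : 1 ≤ n)
    (hv : Summable (sobolevTerm n v)) (hw : Summable (sobolevTerm n w)) {S : ℝ}
    (hS : ∀ k : Fin d → ℤ, sobolevKernel n k ≤ S) :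
    ∑' k, sobolevTerm (n - 1) (advectionCoeff v w) k ≤
      S * ((∑' k, sobolevTerm n v k) * ∑' k, sobolevTerm n w k) := by
  have hconv := hasSum_tsum_mul_sub_of_nonneg hv hw (sobolevTerm_nonneg n v)
    (sobolevTerm_nonneg n w)
  rw [← hconv.tsum_eq, ← tsum_mul_left]
  exact (summable_sobolevTerm_advectionCoeff hn hn1 hv hw).tsum_le_tsum
    (sobolevTerm_advectionCoeff_le_of_sobolevKernel_le hn hn1 hv hw hS)
    (hconv.summable.mul_left S)

end Advection

/-- The fundamental bilinear estimate in Fourier space: for families `v, w` of vectors of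
`ℂ^d` with `‖v‖_n, ‖w‖_n < ∞` (`n > d/2`), the series defining
`(v·∂w)_k = i(2π)^{−d/2} ∑_h (v_h·(k−h)) w_{k−h}` converges absolutely for each `k`,
`∑_k (1+|k|²)^{n−1}|(v·∂w)_k|² ≤ (sup_k 𝒦_n(k)) ‖v‖_n² ‖w‖_n²`, and
`‖v·∂w‖_{n−1} ≤ K_n ‖v‖_n ‖w‖_n` for any `K_n` with `√(sup_k 𝒦_n(k)) ≤ K_n`. -/
theorem stmt_11 (d : ℕ) (hd : 2 ≤ d) (n : ℝ) (hn : (d : ℝ) / 2 < n)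
    (v w : (Fin d → ℤ) → (Fin d → ℂ))
    (hv : Summable (fun k : Fin d → ℤ => (1 + znorm k ^ 2) ^ n * cnorm2 (v k)))
    (hw : Summable (fun k : Fin d → ℤ => (1 + znorm k ^ 2) ^ n * cnorm2 (w k)))
    (pd : (Fin d → ℤ) → (Fin d → ℂ))
    (hpd : ∀ k : Fin d → ℤ, pd k =
      (Complex.I / Complex.ofReal ((2 * Real.pi) ^ ((d : ℝ) / 2))) •
        ∑' h : Fin d → ℤ, (∑ r, v h r * (((k - h) r : ℤ) : ℂ)) • w (k - h))
    (KK : (Fin d → ℤ) → ℝ)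
    (hKK : ∀ k, KK k = (1 + znorm k ^ 2) ^ (n - 1) / (2 * Real.pi) ^ d *
      ∑' h : Fin d → ℤ,
        znorm (k - h) ^ 2 /
          ((1 + znorm h ^ 2) ^ n * (1 + znorm (k - h) ^ 2) ^ n)) :
    (∀ k : Fin d → ℤ, Summable (fun h : Fin d → ℤ =>
      Real.sqrt (cnorm2 ((∑ r, v h r * (((k - h) r : ℤ) : ℂ)) • w (k - h))))) ∧
    Summable (fun k : Fin d → ℤ => (1 + znorm k ^ 2) ^ (n - 1) * cnorm2 (pd k)) ∧
    (∀ S : ℝ, (∀ k : Fin d → ℤ, KK k ≤ S) →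
      (∑' k : Fin d → ℤ, (1 + znorm k ^ 2) ^ (n - 1) * cnorm2 (pd k)) ≤
        S * ((∑' k : Fin d → ℤ, (1 + znorm k ^ 2) ^ n * cnorm2 (v k)) *
          (∑' k : Fin d → ℤ, (1 + znorm k ^ 2) ^ n * cnorm2 (w k)))) ∧
    (∀ Kn : ℝ, (∀ k : Fin d → ℤ, Real.sqrt (KK k) ≤ Kn) →
      Real.sqrt (∑' k : Fin d → ℤ, (1 + znorm k ^ 2) ^ (n - 1) * cnorm2 (pd k)) ≤
        Kn * (Real.sqrt (∑' k : Fin d → ℤ, (1 + znorm k ^ 2) ^ n * cnorm2 (v k)) *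
          Real.sqrt (∑' k : Fin d → ℤ, (1 + znorm k ^ 2) ^ n * cnorm2 (w k)))) := by
  have hn1 : 1 ≤ n := by
    have : (2 : ℝ) ≤ d := by exact_mod_cast hd
    linarith
  obtain rfl : pd = advectionCoeff v w := funext hpd
  obtain rfl : KK = sobolevKernel n := funext hKK
  refine ⟨fun k => (summable_advectionTerm_and_cnorm2_tsum_le hn hn1 hv hw k).1,
    summable_sobolevTerm_advectionCoeff hn hn1 hv hw,
    fun S => tsum_sobolevTerm_advectionCoeff_le hn hn1 hv hw, fun Kn hKn => ?_⟩
  calc √(∑' k, sobolevTerm (n - 1) (advectionCoeff v w) k)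
      ≤ √(Kn ^ 2 * ((∑' k, sobolevTerm n v k) * ∑' k, sobolevTerm n w k)) :=
        Real.sqrt_le_sqrt <| tsum_sobolevTerm_advectionCoeff_le hn hn1 hv hw fun k =>
          (Real.sqrt_le_iff.1 (hKn k)).2
    _ = Kn * (√(∑' k, sobolevTerm n v k) * √(∑' k, sobolevTerm n w k)) := by
        rw [Real.sqrt_mul (by positivity), Real.sqrt_sq (Real.sqrt_le_iff.1 (hKn 0)).1,
          Real.sqrt_mul (tsum_nonneg (sobolevTerm_nonneg n v))]
end

section
/- Define μ₋ : (0,∞) → (0,∞) by μ₋(t) := e^{2t}/√(2et) for 0 < t ≤ 1/4 and μ₋(t) := √2 for t > 1/4. Then ∫₀^t μ₋(t−s)e^{−s} ds < √2 for every t ∈ [0,∞), the integral tends to √2 as t → ∞, and hence sup_{t∈[0,∞)} ∫₀^t μ₋(t−s)e^{−s} ds = √2. -/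
open Set MeasureTheory

noncomputable def Gf : ℝ → ℝ := fun u =>
  if u ≤ 1/4 then Real.exp (3*u) / Real.sqrt (2 * Real.exp 1 * u) else Real.sqrt 2 * Real.exp u

lemma Gf_meas : Measurable Gf :=
  Measurable.ite measurableSet_Iic
    ((Real.measurable_exp.comp (measurable_const_mul 3)).div
      (Real.continuous_sqrt.measurable.comp (measurable_const_mul (2 * Real.exp 1))))
    (Real.measurable_exp.const_mul _)

lemma Gf_nonneg (u : ℝ) : 0 ≤ Gf u := by
  unfold Gf
  split_ifs
  · exact div_nonneg (Real.exp_nonneg _) (Real.sqrt_nonneg _)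
  · exact mul_nonneg (Real.sqrt_nonneg _) (Real.exp_nonneg _)

lemma Gf_le {t u : ℝ} (hu : 0 < u) (hut : u ≤ t) :
    Gf u ≤ Real.exp (3*t) / Real.sqrt (2 * Real.exp 1) * u ^ (-(1/2) : ℝ)
      + Real.sqrt 2 * Real.exp u := by
  have hD : 0 < Real.sqrt (2 * Real.exp 1) := Real.sqrt_pos.mpr (by positivity)
  have hsu : 0 < Real.sqrt u := Real.sqrt_pos.mpr hu
  unfold Gf
  split_ifs with h
  · have hru : u ^ (-(1/2) : ℝ) = (Real.sqrt u)⁻¹ := by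
      rw [Real.rpow_neg hu.le, ← Real.sqrt_eq_rpow]
    have hsplit : Real.sqrt (2 * Real.exp 1 * u)
        = Real.sqrt (2 * Real.exp 1) * Real.sqrt u := Real.sqrt_mul (by positivity) u
    rw [hru, hsplit, ← div_eq_mul_inv, div_div]
    have h1 : Real.exp (3*u) / (Real.sqrt (2 * Real.exp 1) * Real.sqrt u)
        ≤ Real.exp (3*t) / (Real.sqrt (2 * Real.exp 1) * Real.sqrt u) := by
      gcongr
    have h2 : 0 ≤ Real.sqrt 2 * Real.exp u :=
      mul_nonneg (Real.sqrt_nonneg _) (Real.exp_nonneg _)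
    linarith
  · have : 0 ≤ Real.exp (3*t) / Real.sqrt (2 * Real.exp 1) * u ^ (-(1/2) : ℝ) := by positivity
    linarith

lemma Gf_int {t : ℝ} (ht : 0 ≤ t) : IntervalIntegrable Gf volume 0 t := by
  rw [intervalIntegrable_iff_integrableOn_Ioc_of_le ht]
  have hφ : IntervalIntegrable (fun u : ℝ =>
      Real.exp (3*t) / Real.sqrt (2 * Real.exp 1) * u ^ (-(1/2) : ℝ)
        + Real.sqrt 2 * Real.exp u) volume 0 t :=
    ((intervalIntegral.intervalIntegrable_rpow' (by norm_num)).const_mul _).add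
      ((Real.continuous_exp.intervalIntegrable 0 t).const_mul _)
  have hφ' := (intervalIntegrable_iff_integrableOn_Ioc_of_le ht).mp hφ
  refine MeasureTheory.Integrable.mono hφ' (Gf_meas.aestronglyMeasurable.restrict) ?_
  rw [ae_restrict_iff' measurableSet_Ioc]
  refine Filter.Eventually.of_forall fun u hu => ?_
  have hb := Gf_le hu.1 hu.2
  have h0 : (0:ℝ) ≤ Real.exp (3*t) / Real.sqrt (2 * Real.exp 1) * u ^ (-(1/2) : ℝ)
      + Real.sqrt 2 * Real.exp u :=
    add_nonneg (mul_nonneg (by positivity) (Real.rpow_nonneg hu.1.le _))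
      (mul_nonneg (Real.sqrt_nonneg _) (Real.exp_nonneg _))
  rw [Real.norm_eq_abs, Real.norm_eq_abs, abs_of_nonneg (Gf_nonneg u), abs_of_nonneg h0]
  exact hb

lemma sqrt_quarter : Real.sqrt (1/4) = 1/2 := by
  rw [show (1/4:ℝ) = (1/2)^2 by norm_num, Real.sqrt_sq (by norm_num)]

lemma Gf_bound {t : ℝ} (ht : 0 ≤ t) (ht4 : t ≤ 1/4) :
    ∫ u in (0:ℝ)..t, Gf u
      ≤ Real.exp (3*t) / Real.sqrt (2 * Real.exp 1) * (2 * Real.sqrt t) := by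
  have hD : 0 < Real.sqrt (2 * Real.exp 1) := Real.sqrt_pos.mpr (by positivity)
  have hint : IntervalIntegrable
      (fun u : ℝ => Real.exp (3*t) / Real.sqrt (2 * Real.exp 1) * u ^ (-(1/2) : ℝ))
      volume 0 t := (intervalIntegral.intervalIntegrable_rpow' (by norm_num)).const_mul _
  have hmono := intervalIntegral.integral_mono_on ht (Gf_int ht) hint ?_
  · have hev : ∫ u in (0:ℝ)..t, Real.exp (3*t) / Real.sqrt (2 * Real.exp 1) * u ^ (-(1/2) : ℝ)
        = Real.exp (3*t) / Real.sqrt (2 * Real.exp 1) * (2 * Real.sqrt t) := by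
      rw [intervalIntegral.integral_const_mul]
      congr 1
      rw [integral_rpow (Or.inl (by norm_num))]
      rw [show (-(1/2) : ℝ) + 1 = 1/2 by norm_num, Real.zero_rpow (by norm_num : (1/2:ℝ) ≠ 0),
        ← Real.sqrt_eq_rpow]
      ring
    rw [hev] at hmono
    exact hmono
  · intro x hx
    rcases eq_or_lt_of_le hx.1 with h0 | h0
    · have hx0 : x = 0 := h0.symm
      subst hx0
      have : Gf 0 = 0 := by
        unfold Gf
        rw [if_pos (by norm_num)]
        simp
      rw [this, Real.zero_rpow (by norm_num : (-(1/2):ℝ) ≠ 0)]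
      simp
    · have hb := Gf_le h0 hx.2
      have hgf : Gf x = Real.exp (3*x) / Real.sqrt (2 * Real.exp 1 * x) := by
        unfold Gf; rw [if_pos (le_trans hx.2 ht4)]
      rw [hgf]
      have hru : x ^ (-(1/2) : ℝ) = (Real.sqrt x)⁻¹ := by
        rw [Real.rpow_neg h0.le, ← Real.sqrt_eq_rpow]
      have hsu : 0 < Real.sqrt x := Real.sqrt_pos.mpr h0
      have hsplit : Real.sqrt (2 * Real.exp 1 * x)
          = Real.sqrt (2 * Real.exp 1) * Real.sqrt x := Real.sqrt_mul (by positivity) x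
      rw [hru, hsplit, ← div_eq_mul_inv, div_div]
      gcongr
      exact hx.2

lemma Gf_eval {t : ℝ} (ht : 1/4 ≤ t) :
    ∫ u in (0:ℝ)..t, Gf u
      = (∫ u in (0:ℝ)..(1/4:ℝ), Gf u) + Real.sqrt 2 * (Real.exp t - Real.exp (1/4)) := by
  have h0t : (0:ℝ) ≤ t := le_trans (by norm_num) ht
  have hi1 : IntervalIntegrable Gf volume 0 (1/4) := Gf_int (by norm_num)
  have hi2 : IntervalIntegrable Gf volume (1/4) t := hi1.symm.trans (Gf_int h0t)
  rw [← intervalIntegral.integral_add_adjacent_intervals hi1 hi2]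
  congr 1
  have : ∫ u in (1/4:ℝ)..t, Gf u = ∫ u in (1/4:ℝ)..t, Real.sqrt 2 * Real.exp u := by
    apply intervalIntegral.integral_congr_ae
    refine Filter.Eventually.of_forall fun x hx => ?_
    rw [uIoc_of_le ht] at hx
    unfold Gf
    rw [if_neg (not_le.mpr hx.1)]
  rw [this, intervalIntegral.integral_const_mul, integral_exp]

lemma sqrt2e : Real.sqrt (2 * Real.exp 1) = Real.sqrt 2 * Real.exp (1/2) := by
  rw [Real.sqrt_mul (by norm_num : (0:ℝ) ≤ 2), ← Real.exp_half]

lemma C_lt : (∫ u in (0:ℝ)..(1/4:ℝ), Gf u) < Real.sqrt 2 * Real.exp (1/4) := by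
  have hD : 0 < Real.sqrt (2 * Real.exp 1) := Real.sqrt_pos.mpr (by positivity)
  have h := Gf_bound (t := 1/4) (by norm_num) le_rfl
  rw [sqrt_quarter] at h
  have hle : (∫ u in (0:ℝ)..(1/4:ℝ), Gf u) ≤ Real.exp (3/4) / Real.sqrt (2 * Real.exp 1) := by
    calc (∫ u in (0:ℝ)..(1/4:ℝ), Gf u)
        ≤ Real.exp (3*(1/4)) / Real.sqrt (2 * Real.exp 1) * (2 * (1/2)) := h
      _ = Real.exp (3/4) / Real.sqrt (2 * Real.exp 1) := by norm_num
  refine lt_of_le_of_lt hle ?_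
  rw [div_lt_iff₀ hD, sqrt2e]
  have hs2 : Real.sqrt 2 * Real.sqrt 2 = 2 := Real.mul_self_sqrt (by norm_num)
  have hee : Real.exp (1/4) * Real.exp (1/2) = Real.exp (3/4) := by
    rw [← Real.exp_add]; norm_num
  have hexpand : Real.sqrt 2 * Real.exp (1/4) * (Real.sqrt 2 * Real.exp (1/2))
      = (Real.sqrt 2 * Real.sqrt 2) * (Real.exp (1/4) * Real.exp (1/2)) := by ring
  rw [hexpand, hs2, hee]
  linarith [Real.exp_pos (3/4 : ℝ)]

lemma Frepr (μm : ℝ → ℝ)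
    (hμm : ∀ t : ℝ, 0 < t → μm t = if t ≤ 1 / 4 then
      Real.exp (2 * t) / Real.sqrt (2 * Real.exp 1 * t) else Real.sqrt 2)
    {t : ℝ} (ht : 0 < t) :
    ∫ s in (0:ℝ)..t, μm (t - s) * Real.exp (-s)
      = Real.exp (-t) * ∫ u in (0:ℝ)..t, Gf u := by
  have h1 : ∫ s in (0:ℝ)..t, μm (t - s) * Real.exp (-s)
      = ∫ s in (0:ℝ)..t, Real.exp (-t) * Gf (t - s) := by
    apply intervalIntegral.integral_congr_ae
    have hne : ∀ᵐ x : ℝ, x ≠ t := by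
      refine ae_iff.mpr ?_
      have he : {x : ℝ | ¬ x ≠ t} = {t} := by ext x; simp
      rw [he]
      exact measure_singleton t
    filter_upwards [hne] with s hst hs
    rw [uIoc_of_le ht.le] at hs
    have hs' : 0 < t - s := by
      rcases lt_or_eq_of_le hs.2 with h | h
      · linarith
      · exact absurd h hst
    rw [hμm (t - s) hs']
    unfold Gf
    by_cases hcase : t - s ≤ 1/4
    · rw [if_pos hcase, if_pos hcase, div_mul_eq_mul_div, ← Real.exp_add,
        ← mul_div_assoc, ← Real.exp_add]
      have harg : 2*(t-s) + -s = -t + 3*(t-s) := by ring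
      rw [harg]
    · rw [if_neg hcase, if_neg hcase,
        show Real.exp (-t) * (Real.sqrt 2 * Real.exp (t - s))
          = Real.sqrt 2 * (Real.exp (-t) * Real.exp (t - s)) from by ring,
        ← Real.exp_add, show -t + (t - s) = -s from by ring]
  rw [h1, intervalIntegral.integral_const_mul]
  congr 1
  simpa using intervalIntegral.integral_comp_sub_left Gf t

/-- For `μ₋(t) = e^{2t}/√(2et)` on `(0, 1/4]` and `μ₋(t) = √2` on `(1/4, ∞)`, the integral
`∫₀ᵗ μ₋(t−s)e^{−s} ds` is `< √2` for every `t ≥ 0`, tends to `√2` as `t → ∞`, and hence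
its supremum over `t ∈ [0,∞)` equals `√2`. -/
theorem stmt_15 (μm : ℝ → ℝ)
    (hμm : ∀ t : ℝ, 0 < t → μm t = if t ≤ 1 / 4 then
      Real.exp (2 * t) / Real.sqrt (2 * Real.exp 1 * t) else Real.sqrt 2) :
    (∀ t : ℝ, 0 ≤ t →
      (∫ s in (0:ℝ)..t, μm (t - s) * Real.exp (-s)) < Real.sqrt 2) ∧
    Filter.Tendsto (fun t : ℝ => ∫ s in (0:ℝ)..t, μm (t - s) * Real.exp (-s))
      Filter.atTop (nhds (Real.sqrt 2)) ∧
    sSup ((fun t : ℝ => ∫ s in (0:ℝ)..t, μm (t - s) * Real.exp (-s)) '' Ici (0:ℝ)) =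
      Real.sqrt 2 := by
  have hs2 : Real.sqrt 2 * Real.sqrt 2 = 2 := Real.mul_self_sqrt (by norm_num)
  have hs2pos : 0 < Real.sqrt 2 := Real.sqrt_pos.mpr (by norm_num)
  have hD : 0 < Real.sqrt (2 * Real.exp 1) := Real.sqrt_pos.mpr (by positivity)
  have part1 : ∀ t : ℝ, 0 ≤ t →
      (∫ s in (0:ℝ)..t, μm (t - s) * Real.exp (-s)) < Real.sqrt 2 := by
    intro t ht
    rcases eq_or_lt_of_le ht with h0 | h0
    · rw [← h0, intervalIntegral.integral_same]
      exact hs2pos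
    · rw [Frepr μm hμm h0]
      by_cases hc : t ≤ 1/4
      · have hI := Gf_bound ht hc
        have hmul : Real.exp (-t) * (∫ u in (0:ℝ)..t, Gf u)
            ≤ Real.exp (-t) * (Real.exp (3*t) / Real.sqrt (2 * Real.exp 1) * (2 * Real.sqrt t)) :=
          mul_le_mul_of_nonneg_left hI (Real.exp_nonneg _)
        have hA : Real.exp (-t) * (Real.exp (3*t) / Real.sqrt (2 * Real.exp 1) * (2 * Real.sqrt t))
            = Real.exp (2*t) * (2 * Real.sqrt t) / Real.sqrt (2 * Real.exp 1) := by
          rw [div_mul_eq_mul_div, ← mul_div_assoc, ← mul_assoc, ← Real.exp_add,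
            show -t + 3*t = 2*t from by ring]
        have hst : 2 * Real.sqrt t ≤ 1 := by
          have := Real.sqrt_le_sqrt hc
          rw [sqrt_quarter] at this
          linarith
        have he2 : Real.exp (2*t) ≤ Real.exp (1/2) := Real.exp_le_exp.mpr (by linarith)
        have hB : Real.exp (2*t) * (2 * Real.sqrt t) / Real.sqrt (2 * Real.exp 1)
            ≤ Real.exp (1/2) * 1 / Real.sqrt (2 * Real.exp 1) := by
          gcongr
        have hC : Real.exp (1/2) * 1 / Real.sqrt (2 * Real.exp 1) < Real.sqrt 2 := by
          rw [mul_one, div_lt_iff₀ hD, sqrt2e]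
          nlinarith [Real.exp_pos (1/2 : ℝ)]
        linarith [hmul, hA ▸ hmul]
      · push_neg at hc
        rw [Gf_eval hc.le]
        have h1 : Real.exp (-t) * Real.exp t = 1 := by rw [← Real.exp_add]; simp
        have hkey := mul_lt_mul_of_pos_left C_lt (Real.exp_pos (-t))
        nlinarith [hkey, h1, Real.exp_pos (-t)]
  have hev : ∀ᶠ t : ℝ in Filter.atTop,
      (∫ s in (0:ℝ)..t, μm (t - s) * Real.exp (-s))
        = Real.sqrt 2 + ((∫ u in (0:ℝ)..(1/4:ℝ), Gf u) - Real.sqrt 2 * Real.exp (1/4))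
            * Real.exp (-t) := by
    filter_upwards [Filter.eventually_gt_atTop (1/4 : ℝ)] with t ht
    rw [Frepr μm hμm (by linarith), Gf_eval ht.le]
    have h1 : Real.exp (-t) * Real.exp t = 1 := by rw [← Real.exp_add]; simp
    linear_combination Real.sqrt 2 * h1
  have part2 : Filter.Tendsto (fun t : ℝ => ∫ s in (0:ℝ)..t, μm (t - s) * Real.exp (-s))
      Filter.atTop (nhds (Real.sqrt 2)) := by
    have hlim : Filter.Tendsto (fun t : ℝ => Real.sqrt 2
        + ((∫ u in (0:ℝ)..(1/4:ℝ), Gf u) - Real.sqrt 2 * Real.exp (1/4)) * Real.exp (-t))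
        Filter.atTop (nhds (Real.sqrt 2)) := by
      have := (tendsto_const_nhds (x := Real.sqrt 2) (f := Filter.atTop (α := ℝ))).add
        (Real.tendsto_exp_neg_atTop_nhds_zero.const_mul
          ((∫ u in (0:ℝ)..(1/4:ℝ), Gf u) - Real.sqrt 2 * Real.exp (1/4)))
      simpa using this
    exact Filter.Tendsto.congr' (Filter.EventuallyEq.symm hev) hlim
  refine ⟨part1, part2, ?_⟩
  apply csSup_eq_of_forall_le_of_forall_lt_exists_gt
  · exact ⟨_, ⟨0, self_mem_Ici, rfl⟩⟩
  · rintro a ⟨t, htt, rfl⟩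
    exact (part1 t htt).le
  · intro w hw
    have hev2 := (part2.eventually (eventually_gt_nhds hw)).and
      (Filter.eventually_ge_atTop (0:ℝ))
    obtain ⟨t, hwt, ht⟩ := hev2.exists
    exact ⟨_, ⟨t, ht, rfl⟩, hwt⟩
end

section
/- Let d ≥ 1 be an integer, let ρ, ρ₁ satisfy 2√d ≤ ρ < ρ₁ ≤ +∞, and let χ : [ρ−2√d, ρ₁) → [0,∞) be continuous and nonincreasing. Then ∑_{h∈ℤ^d, ρ≤|h|<ρ₁} χ(|h|) ≤ (2π^{d/2}/Γ(d/2)) ∫_{ρ−2√d}^{ρ₁} (t+√d)^{d−1} χ(t) dt. -/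
/-!
Each lattice point `h` owns the unit cube `h + [0,1)^d`; these cubes are disjoint and every
point of the cube of `h` has norm within `√d` of `|h|`. Hence the lattice points with
`ρ ≤ |h| ≤ u` number at most the volume of the shell `ρ - √d ≤ |x| ≤ u + √d`, which is
`(2π^{d/2}/Γ(d/2)) ∫_{ρ-2√d}^{u} (t+√d)^{d-1} dt`. For a nonincreasing `χ ≥ 0`, every
superlevel set `{h : s < χ(|h|)}` is a directed union of such initial segments of the lattice,
so the layer-cake formula applied to both sides reduces the inequality to this counting bound.
-/

open Set MeasureTheory

open Metric Measure
open scoped ENNReal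

theorem exists_antitone_nonneg_extension {a : ℝ} {b : EReal} {f : ℝ → ℝ}
    (hf_nonneg : ∀ t, a ≤ t → (t : EReal) < b → 0 ≤ f t)
    (hf_anti : ∀ s t, a ≤ s → s ≤ t → (t : EReal) < b → f t ≤ f s) :
    ∃ g : ℝ → ℝ, Antitone g ∧ 0 ≤ g ∧ ∀ t, a ≤ t → (t : EReal) < b → g t = f t := by
  refine ⟨fun t => if ((max t a : ℝ) : EReal) < b then f (max t a) else 0, ?_, ?_, ?_⟩
  · intro s t hst
    have hmax : max s a ≤ max t a := max_le_max_right a hst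
    dsimp only
    split_ifs with ht hs hs
    · exact hf_anti _ _ (le_max_right _ _) hmax ht
    · exact absurd ((EReal.coe_le_coe_iff.2 hmax).trans_lt ht) hs
    · exact hf_nonneg _ (le_max_right _ _) hs
    · exact le_rfl
  · intro t
    dsimp only
    split_ifs with ht
    · exact hf_nonneg _ (le_max_right _ _) ht
    · exact le_rfl
  · intro t hat htb
    simp [max_eq_left hat, htb]

section LayerCake

variable {α : Type*} [MeasurableSpace α] [Countable α]
  {N : α → ℝ} {g : ℝ → ℝ} {ν : Measure ℝ} {C : ℝ≥0∞}

theorem count_superlevelSet_le (hg : Antitone g)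
    (hN : ∀ x, count {y | N y ≤ N x} ≤ C * ν (Iic (N x))) (s : ℝ) :
    count {x | s < g (N x)} ≤ C * ν {t | s < g t} := by
  set L := {x | s < g (N x)}
  have hL : L = ⋃ x : L, {y | N y ≤ N x} := by
    ext y
    simp only [mem_iUnion, mem_ofPred_eq]
    exact ⟨fun hy => ⟨⟨y, hy⟩, le_rfl⟩, fun ⟨x, hyx⟩ => x.2.trans_le (hg hyx)⟩
  have hdir : Directed (· ⊆ ·) fun x : L => {y | N y ≤ N x} := by
    intro x x'
    rcases le_total (N x) (N x') with h | h
    · exact ⟨x', fun y hy => le_trans hy h, fun y hy => hy⟩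
    · exact ⟨x, fun y hy => hy, fun y hy => le_trans hy h⟩
  rw [hL, hdir.measure_iUnion]
  refine iSup_le fun x => (hN x).trans (mul_le_mul_right (measure_mono fun t ht => ?_) C)
  exact x.2.trans_le (hg ht)

theorem tsum_ofReal_comp_le_mul_lintegral [MeasurableSingletonClass α] (hg : Antitone g)
    (hg_nonneg : 0 ≤ g)
    (hN : ∀ x, count {y | N y ≤ N x} ≤ C * ν (Iic (N x))) :
    ∑' x, ENNReal.ofReal (g (N x)) ≤ C * ∫⁻ t, ENNReal.ofReal (g t) ∂ν := by
  have hlevel : Measurable fun s => ν {t | s < g t} :=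
    Antitone.measurable fun s s' hss' => measure_mono fun t ht => hss'.trans_lt ht
  calc ∑' x, ENNReal.ofReal (g (N x))
      = ∫⁻ s in Ioi 0, count {x | s < g (N x)} := by
        rw [← lintegral_count, lintegral_eq_lintegral_meas_lt (f := fun x => g (N x)) _
          (ae_of_all _ fun x => hg_nonneg _) (measurable_of_countable _).aemeasurable]
    _ ≤ ∫⁻ s in Ioi 0, C * ν {t | s < g t} :=
        lintegral_mono fun s => count_superlevelSet_le hg hN s
    _ = C * ∫⁻ s in Ioi 0, ν {t | s < g t} := lintegral_const_mul C hlevel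
    _ = C * ∫⁻ t, ENNReal.ofReal (g t) ∂ν := by
        rw [lintegral_eq_lintegral_meas_lt ν (ae_of_all _ hg_nonneg) hg.measurable.aemeasurable]

end LayerCake

section Annulus

variable {E : Type*} [NormedAddCommGroup E] [InnerProductSpace ℝ E] [FiniteDimensional ℝ E]
  [MeasurableSpace E] [BorelSpace E] [Nontrivial E]

/-- The volume `√π ^ n / Γ(n/2 + 1)` of the unit ball is `1/n` times the area
`2π^{n/2}/Γ(n/2)` of the unit sphere. -/
theorem sqrt_pi_pow_div_Gamma_eq {n : ℕ} (hn : n ≠ 0) :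
    Real.sqrt Real.pi ^ n / Real.Gamma (n / 2 + 1) =
      2 * Real.pi ^ ((n : ℝ) / 2) / Real.Gamma ((n : ℝ) / 2) / n := by
  have hn' : (0 : ℝ) < n := by positivity
  have hΓ : 0 < Real.Gamma ((n : ℝ) / 2) := Real.Gamma_pos_of_pos (by positivity)
  rw [Real.Gamma_add_one (by positivity), Real.sqrt_eq_rpow,
    ← Real.rpow_mul_natCast Real.pi_pos.le]
  field_simp

theorem volume_closedBall_diff_ball (x : E) {a b : ℝ} (ha : 0 ≤ a) (hab : a ≤ b) :
    volume (closedBall x b \ ball x a) =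
      ENNReal.ofReal (2 * Real.pi ^ ((Module.finrank ℝ E : ℝ) / 2) /
        Real.Gamma ((Module.finrank ℝ E : ℝ) / 2) *
          ((b ^ Module.finrank ℝ E - a ^ Module.finrank ℝ E) / Module.finrank ℝ E)) := by
  set n := Module.finrank ℝ E
  have hn : n ≠ 0 := Module.finrank_pos.ne'
  rw [measure_sdiff (ball_subset_closedBall.trans (closedBall_subset_closedBall hab))
      measurableSet_ball.nullMeasurableSet measure_ball_lt_top.ne,
    InnerProductSpace.volume_closedBall, InnerProductSpace.volume_ball,
    ← ENNReal.ofReal_pow ha, ← ENNReal.ofReal_pow (ha.trans hab), sqrt_pi_pow_div_Gamma_eq hn,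
    ← ENNReal.ofReal_mul (pow_nonneg ha n), ← ENNReal.ofReal_mul (pow_nonneg (ha.trans hab) n),
    ← ENNReal.ofReal_sub _ (by positivity)]
  congr 1
  ring

end Annulus

theorem lintegral_Icc_add_pow {n : ℕ} (hn : n ≠ 0) {a u c : ℝ} (hac : 0 ≤ a + c)
    (hau : a ≤ u) :
    ∫⁻ t in Icc a u, ENNReal.ofReal ((t + c) ^ (n - 1)) =
      ENNReal.ofReal (((u + c) ^ n - (a + c) ^ n) / n) := by
  have hnn : 0 ≤ᵐ[volume.restrict (Icc a u)] fun t => (t + c) ^ (n - 1) :=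
    (ae_restrict_iff' measurableSet_Icc).2 (ae_of_all _ fun t ht =>
      pow_nonneg (by linarith [ht.1]) _)
  have hcont : Continuous fun t : ℝ => (t + c) ^ (n - 1) := by fun_prop
  rw [← ofReal_integral_eq_lintegral_ofReal hcont.integrableOn_Icc hnn,
    integral_Icc_eq_integral_Ioc, ← intervalIntegral.integral_of_le hau,
    intervalIntegral.integral_comp_add_right (fun t => t ^ (n - 1)), integral_pow,
    Nat.sub_add_cancel (Nat.one_le_iff_ne_zero.2 hn), Nat.cast_sub (Nat.one_le_iff_ne_zero.2 hn)]
  push_cast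
  ring_nf

section Lattice

variable {d : ℕ}

def latticeCube (h : Fin d → ℤ) : Set (EuclideanSpace ℝ (Fin d)) :=
  {x | ∀ i, x i ∈ Ico (h i : ℝ) (h i + 1)}

theorem latticeCube_eq_preimage (h : Fin d → ℤ) :
    latticeCube h = (MeasurableEquiv.toLp 2 (Fin d → ℝ)).symm ⁻¹'
      univ.pi fun i => Ico (h i : ℝ) (h i + 1) := by
  ext x
  simp [latticeCube, mem_pi]

theorem measurableSet_latticeCube (h : Fin d → ℤ) : MeasurableSet (latticeCube h) := by
  rw [latticeCube_eq_preimage]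
  exact (MeasurableEquiv.toLp 2 (Fin d → ℝ)).symm.measurable
    (MeasurableSet.univ_pi fun _ => measurableSet_Ico)

theorem volume_latticeCube (h : Fin d → ℤ) : volume (latticeCube h) = 1 := by
  rw [latticeCube_eq_preimage,
    (EuclideanSpace.volume_preserving_symm_measurableEquiv_toLp (Fin d)).measure_preimage
      (MeasurableSet.univ_pi fun _ => measurableSet_Ico).nullMeasurableSet, volume_pi_pi]
  simp

theorem pairwise_disjoint_latticeCube :
    Pairwise fun h h' : Fin d → ℤ => Disjoint (latticeCube h) (latticeCube h') := by
  intro h h' hne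
  refine disjoint_left.2 fun x hx hx' => hne (funext fun i => ?_)
  rw [← Int.floor_eq_iff.2 (hx i), ← Int.floor_eq_iff.2 (hx' i)]

theorem norm_toLp_intCast (h : Fin d → ℤ) :
    ‖WithLp.toLp 2 (fun i => (h i : ℝ))‖ = znorm h := by
  simp [EuclideanSpace.norm_eq, znorm]

theorem abs_norm_sub_znorm_le {h : Fin d → ℤ} {x : EuclideanSpace ℝ (Fin d)}
    (hx : x ∈ latticeCube h) : |‖x‖ - znorm h| ≤ Real.sqrt d := by
  rw [← norm_toLp_intCast]
  refine (abs_norm_sub_norm_le _ _).trans ?_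
  rw [EuclideanSpace.norm_eq]
  refine Real.sqrt_le_sqrt ((Finset.sum_le_card_nsmul _ _ 1 fun i _ => ?_).trans (by simp))
  obtain ⟨hlo, hhi⟩ := hx i
  rw [Real.norm_eq_abs, sq_abs, PiLp.sub_apply]
  nlinarith

theorem count_le_volume_closedBall_diff_ball {T : Set (Fin d → ℤ)} {r u : ℝ}
    (hT : ∀ h ∈ T, r ≤ znorm h ∧ znorm h ≤ u) :
    count T ≤ volume (closedBall (0 : EuclideanSpace ℝ (Fin d)) (u + Real.sqrt d) \
      ball 0 (r - Real.sqrt d)) := by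
  calc count T = ∑' h : T, volume (latticeCube h.1) := by
        simp [volume_latticeCube, count_apply T.to_countable.measurableSet]
    _ = volume (⋃ h : T, latticeCube h.1) :=
        (measure_iUnion
          (fun h h' hne => pairwise_disjoint_latticeCube (Subtype.coe_ne_coe.2 hne))
          fun h => measurableSet_latticeCube h.1).symm
    _ ≤ _ := by
        refine measure_mono (iUnion_subset fun h x hx => ?_)
        have hxh := abs_le.1 (abs_norm_sub_znorm_le hx)
        have := hT h.1 h.2
        simp only [mem_sdiff, mem_closedBall, mem_ball, dist_zero_right, not_lt]
        constructor <;> linarith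

theorem count_le_mul_lintegral (hd : 1 ≤ d) {T : Set (Fin d → ℤ)} {ρ u : ℝ}
    (hρ : 2 * Real.sqrt d ≤ ρ) (hρu : ρ ≤ u) (hT : ∀ h ∈ T, ρ ≤ znorm h ∧ znorm h ≤ u) :
    count T ≤ ENNReal.ofReal (2 * Real.pi ^ ((d : ℝ) / 2) / Real.Gamma ((d : ℝ) / 2)) *
      ∫⁻ t in Icc (ρ - 2 * Real.sqrt d) u, ENNReal.ofReal ((t + Real.sqrt d) ^ (d - 1)) := by
  have : Nonempty (Fin d) := ⟨⟨0, hd⟩⟩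
  have hsd := Real.sqrt_nonneg (d : ℝ)
  calc count T ≤ volume (closedBall (0 : EuclideanSpace ℝ (Fin d)) (u + Real.sqrt d) \
        ball 0 (ρ - Real.sqrt d)) := count_le_volume_closedBall_diff_ball hT
    _ = _ := by
        rw [volume_closedBall_diff_ball _ (by linarith) (by linarith), finrank_euclideanSpace_fin,
          lintegral_Icc_add_pow (by omega) (by linarith) (by linarith),
          ← ENNReal.ofReal_mul
            (div_nonneg (by positivity) (Real.Gamma_pos_of_pos (by positivity)).le)]
        ring_nf

end Lattice

theorem stmt_16_general (d : ℕ) (hd : 1 ≤ d) (ρ : ℝ) (ρ₁ : EReal)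
    (hρ : 2 * Real.sqrt d ≤ ρ)
    (χ : ℝ → ℝ)
    (hχ_nonneg : ∀ t : ℝ, ρ - 2 * Real.sqrt d ≤ t → (t : EReal) < ρ₁ → 0 ≤ χ t)
    (hχ_anti : ∀ s t : ℝ, ρ - 2 * Real.sqrt d ≤ s → s ≤ t → (t : EReal) < ρ₁ →
      χ t ≤ χ s) :
    ∑' h : {h : Fin d → ℤ // ρ ≤ znorm h ∧ (znorm h : EReal) < ρ₁},
        ENNReal.ofReal (χ (znorm h.1)) ≤
      ENNReal.ofReal (2 * Real.pi ^ ((d : ℝ) / 2) / Real.Gamma ((d : ℝ) / 2)) *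
        ∫⁻ t in {t : ℝ | ρ - 2 * Real.sqrt d ≤ t ∧ (t : EReal) < ρ₁},
          ENNReal.ofReal ((t + Real.sqrt d) ^ (d - 1) * χ t) := by
  set I := {t : ℝ | ρ - 2 * Real.sqrt d ≤ t ∧ (t : EReal) < ρ₁}
  have hI : MeasurableSet I :=
    measurableSet_Ici.inter (measurableSet_lt measurable_coe_real_ereal measurable_const)
  have hsd := Real.sqrt_nonneg (d : ℝ)
  obtain ⟨g, hg_anti, hg_nonneg, hgχ⟩ := exists_antitone_nonneg_extension hχ_nonneg hχ_anti
  set w : ℝ → ℝ≥0∞ := fun t => ENNReal.ofReal ((t + Real.sqrt d) ^ (d - 1))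
  have hw : Measurable w := by fun_prop
  set C := ENNReal.ofReal (2 * Real.pi ^ ((d : ℝ) / 2) / Real.Gamma ((d : ℝ) / 2))
  calc _ = ∑' h : {h : Fin d → ℤ // ρ ≤ znorm h ∧ (znorm h : EReal) < ρ₁},
        ENNReal.ofReal (g (znorm h.1)) :=
        tsum_congr fun h => by rw [hgχ _ (by linarith [h.2.1]) h.2.2]
    _ ≤ C * ∫⁻ t, ENNReal.ofReal (g t) ∂(volume.restrict I).withDensity w := by
        refine tsum_ofReal_comp_le_mul_lintegral hg_anti hg_nonneg fun h => ?_
        rw [← count_injective_image Subtype.val_injective, withDensity_apply _ measurableSet_Iic,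
          Measure.restrict_restrict measurableSet_Iic]
        have hIcc : Icc (ρ - 2 * Real.sqrt d) (znorm h.1) ⊆ Iic (znorm h.1) ∩ I :=
          fun t ht => ⟨ht.2, ht.1, (EReal.coe_le_coe_iff.2 ht.2).trans_lt h.2.2⟩
        refine (count_le_mul_lintegral hd hρ h.2.1 ?_).trans
          (mul_le_mul_right (lintegral_mono_set hIcc) _)
        rintro _ ⟨h', hh', rfl⟩
        exact ⟨h'.2.1, hh'⟩
    _ = _ := by
        rw [lintegral_withDensity_eq_lintegral_mul _ hw hg_anti.measurable.ennreal_ofReal]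
        refine congrArg _ (setLIntegral_congr_fun hI fun t ht => ?_)
        rw [Pi.mul_apply, hgχ t ht.1 ht.2,
          ← ENNReal.ofReal_mul (pow_nonneg (by linarith [ht.1]) _)]

/-- Comparison of lattice sums with radial integrals: for `2√d ≤ ρ < ρ₁ ≤ +∞` and a
nonincreasing continuous `χ : [ρ−2√d, ρ₁) → [0,∞)`,
`∑_{h ∈ ℤ^d, ρ ≤ |h| < ρ₁} χ(|h|) ≤ (2π^{d/2}/Γ(d/2)) ∫_{ρ−2√d}^{ρ₁} (t+√d)^{d−1} χ(t) dt`,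
the inequality being understood in `[0,∞]`. -/
theorem stmt_16 (d : ℕ) (hd : 1 ≤ d) (ρ : ℝ) (ρ₁ : EReal)
    (hρ : 2 * Real.sqrt d ≤ ρ) (hρ₁ : (ρ : EReal) < ρ₁)
    (χ : ℝ → ℝ)
    (hχ_cont : ContinuousOn χ {t : ℝ | ρ - 2 * Real.sqrt d ≤ t ∧ (t : EReal) < ρ₁})
    (hχ_nonneg : ∀ t : ℝ, ρ - 2 * Real.sqrt d ≤ t → (t : EReal) < ρ₁ → 0 ≤ χ t)
    (hχ_anti : ∀ s t : ℝ, ρ - 2 * Real.sqrt d ≤ s → s ≤ t → (t : EReal) < ρ₁ →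
      χ t ≤ χ s) :
    ∑' h : {h : Fin d → ℤ // ρ ≤ znorm h ∧ (znorm h : EReal) < ρ₁},
        ENNReal.ofReal (χ (znorm h.1)) ≤
      ENNReal.ofReal (2 * Real.pi ^ ((d : ℝ) / 2) / Real.Gamma ((d : ℝ) / 2)) *
        ∫⁻ t in {t : ℝ | ρ - 2 * Real.sqrt d ≤ t ∧ (t : EReal) < ρ₁},
          ENNReal.ofReal ((t + Real.sqrt d) ^ (d - 1) * χ t) :=
  stmt_16_general d hd ρ ρ₁ hρ χ hχ_nonneg hχ_anti
end

section
/- Let d ≥ 1 be an integer, ν > d/2 and λ > 2√d. Then (2π)^{−d} ∑_{h∈ℤ^d, |h|≥λ} (1+|h|²)^{−ν} ≤ (1+d)^ν / (2^{d−1} π^{d/2} Γ(d/2) (2ν−d) (λ−√d)^{2ν−d}). -/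
/-!
A lattice point `h` with `|h| ≥ λ` owns the unit cube `h + [0,1)^d`. Every point `x` of that
cube has `|x - h| ≤ √d`, hence `|x| ≥ λ - √d` and, by Cauchy–Schwarz,
`|x|² ≤ (|h| + √d)² ≤ (1 + d)(1 + |h|²)`. The cubes being disjoint of volume one, the tail sum
is at most `(1 + d)^ν ∫_{|x| ≥ λ - √d} |x|^{-2ν} dx`, and polar coordinates evaluate this
integral as `|S^{d-1}| (λ - √d)^{d - 2ν} / (2ν - d)` with `|S^{d-1}| = 2 π^{d/2} / Γ(d/2)`.
-/

open Set

open Function MeasureTheory Module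

lemma sq_add_le_one_add_sq_mul_one_add_sq (s t : ℝ) :
    (t + s) ^ 2 ≤ (1 + s ^ 2) * (1 + t ^ 2) := by
  nlinarith [sq_nonneg (s * t - 1)]

lemma one_add_sq_rpow_neg_le {ν r s t : ℝ} (hν : 0 ≤ ν) (hr : 0 < r) (hrts : r ≤ t + s) :
    (1 + t ^ 2) ^ (-ν) ≤ (1 + s ^ 2) ^ ν * r ^ (-(2 * ν)) := by
  have hsq : r ^ 2 ≤ (1 + s ^ 2) * (1 + t ^ 2) :=
    (pow_le_pow_left₀ hr.le hrts 2).trans (sq_add_le_one_add_sq_mul_one_add_sq s t)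
  calc (1 + t ^ 2) ^ (-ν) = (1 + s ^ 2) ^ ν * ((1 + s ^ 2) * (1 + t ^ 2)) ^ (-ν) := by
        rw [Real.mul_rpow (by positivity) (by positivity), ← mul_assoc,
          ← Real.rpow_add (by positivity), add_neg_cancel, Real.rpow_zero, one_mul]
    _ ≤ (1 + s ^ 2) ^ ν * (r ^ 2) ^ (-ν) :=
        mul_le_mul_of_nonneg_left
          (Real.rpow_le_rpow_of_nonpos (by positivity) hsq (neg_nonpos.2 hν)) (by positivity)
    _ = (1 + s ^ 2) ^ ν * r ^ (-(2 * ν)) := by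
        rw [← Real.rpow_natCast r 2, ← Real.rpow_mul hr.le]
        norm_num

lemma summable_and_tsum_le_of_tsum_ofReal_le {ι : Type*} {f : ι → ℝ} {B : ℝ}
    (hf : ∀ i, 0 ≤ f i) (hB : 0 ≤ B) (h : ∑' i, ENNReal.ofReal (f i) ≤ ENNReal.ofReal B) :
    Summable f ∧ ∑' i, f i ≤ B := by
  have hsum : Summable f := by
    simpa [ENNReal.toReal_ofReal (hf _)] using
      ENNReal.summable_toReal (ne_top_of_le_ne_top ENNReal.ofReal_ne_top h)
  refine ⟨hsum, ?_⟩
  rwa [← ENNReal.ofReal_tsum_of_nonneg hf hsum, ENNReal.ofReal_le_ofReal_iff hB] at h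

lemma tsum_le_lintegral_of_le_on_pairwiseDisjoint {α ι : Type*} [MeasurableSpace α]
    [Countable ι] {μ : Measure α} {s : ι → Set α} (hs : ∀ i, MeasurableSet (s i))
    (hdisj : Pairwise (Disjoint on s)) (hμ : ∀ i, 1 ≤ μ (s i)) {f : ι → ENNReal}
    {g : α → ENNReal} (hfg : ∀ i, ∀ x ∈ s i, f i ≤ g x) :
    ∑' i, f i ≤ ∫⁻ x, g x ∂μ :=
  calc ∑' i, f i ≤ ∑' i, ∫⁻ x in s i, g x ∂μ := ENNReal.tsum_le_tsum fun i =>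
        calc f i ≤ f i * μ (s i) := le_mul_of_one_le_right' (hμ i)
          _ = ∫⁻ _ in s i, f i ∂μ := (setLIntegral_const _ _).symm
          _ ≤ ∫⁻ x in s i, g x ∂μ := setLIntegral_mono' (hs i) (hfg i)
    _ = ∫⁻ x in ⋃ i, s i, g x ∂μ := (lintegral_iUnion hs hdisj g).symm
    _ ≤ ∫⁻ x, g x ∂μ := setLIntegral_le_lintegral _ _

section Radial

variable {E : Type*} [NormedAddCommGroup E] [NormedSpace ℝ E] [FiniteDimensional ℝ E]
  [MeasurableSpace E] [BorelSpace E] [Nontrivial E] (μ : Measure E) [μ.IsAddHaarMeasure]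
  {R p : ℝ}

lemma pow_smul_indicator_Ici_rpow_neg (hR : 0 < R) (n : ℕ) (hn : 1 ≤ n) (y : ℝ) :
    y ^ (n - 1) • (Ici R).indicator (fun r : ℝ => r ^ (-p)) y =
      (Ici R).indicator (fun r : ℝ => r ^ ((n : ℝ) - 1 - p)) y := by
  by_cases hy : y ∈ Ici R
  · have hy0 : 0 < y := hR.trans_le hy
    rw [indicator_of_mem hy, indicator_of_mem hy, smul_eq_mul, ← Real.rpow_natCast,
      Nat.cast_sub hn, Nat.cast_one, ← Real.rpow_add hy0, sub_eq_add_neg _ p]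
  · simp [indicator_of_notMem hy]

lemma integrable_indicator_Ici_rpow_neg_norm (hR : 0 < R) (hp : (finrank ℝ E : ℝ) < p) :
    Integrable (fun x : E => (Ici R).indicator (fun r : ℝ => r ^ (-p)) ‖x‖) μ := by
  rw [integrable_fun_norm_addHaar μ,
    integrableOn_congr_fun (fun y _ => pow_smul_indicator_Ici_rpow_neg hR _ finrank_pos y)
      measurableSet_Ioi]
  refine Integrable.integrableOn ((integrable_indicator_iff measurableSet_Ici).2 ?_)
  exact (integrableOn_Ici_iff_integrableOn_Ioi).2 (integrableOn_Ioi_rpow_of_lt (by linarith) hR)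

lemma integral_indicator_Ici_rpow_neg_norm (hR : 0 < R) (hp : (finrank ℝ E : ℝ) < p) :
    ∫ x : E, (Ici R).indicator (fun r : ℝ => r ^ (-p)) ‖x‖ ∂μ =
      finrank ℝ E * μ.real (Metric.ball 0 1) *
        (R ^ ((finrank ℝ E : ℝ) - p) / (p - finrank ℝ E)) := by
  have hIci : Ioi 0 ∩ Ici R = Ici R := inter_eq_right.2 fun y hy => hR.trans_le hy
  rw [integral_fun_norm_addHaar μ,
    setIntegral_congr_fun measurableSet_Ioi
      (fun y _ => pow_smul_indicator_Ici_rpow_neg hR _ finrank_pos y),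
    setIntegral_indicator measurableSet_Ici, hIci, integral_Ici_eq_integral_Ioi,
    integral_Ioi_rpow_of_lt (by linarith) hR, nsmul_eq_mul, smul_eq_mul,
    show (finrank ℝ E : ℝ) - 1 - p + 1 = finrank ℝ E - p by ring, neg_div, ← div_neg, neg_sub]
  ring

end Radial

lemma EuclideanSpace.card_mul_volume_real_ball_one (ι : Type*) [Fintype ι] [Nonempty ι] :
    Fintype.card ι * volume.real (Metric.ball (0 : EuclideanSpace ℝ ι) 1) =
      2 * Real.pi ^ ((Fintype.card ι : ℝ) / 2) / Real.Gamma ((Fintype.card ι : ℝ) / 2) := by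
  have hn : (0 : ℝ) < Fintype.card ι := by exact_mod_cast Fintype.card_pos
  have hΓ : 0 < Real.Gamma ((Fintype.card ι : ℝ) / 2) := Real.Gamma_pos_of_pos (by positivity)
  rw [measureReal_def, EuclideanSpace.volume_ball, ENNReal.ofReal_one, one_pow, one_mul,
    ENNReal.toReal_ofReal (by positivity), Real.Gamma_add_one (by positivity),
    Real.sqrt_eq_rpow, ← Real.rpow_natCast, ← Real.rpow_mul Real.pi_pos.le]
  field_simp

lemma two_mul_pi_pow_eq {d : ℕ} (hd : 1 ≤ d) :
    (2 * Real.pi) ^ d =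
      2 * 2 ^ (d - 1) * (Real.pi ^ ((d : ℝ) / 2) * Real.pi ^ ((d : ℝ) / 2)) := by
  rw [mul_pow, ← pow_succ', Nat.sub_add_cancel hd, ← Real.rpow_add Real.pi_pos, add_halves,
    Real.rpow_natCast]

section Lattice

variable {ι : Type*}

def latticePoint (h : ι → ℤ) : EuclideanSpace ℝ ι := WithLp.toLp 2 fun i => (h i : ℝ)

lemma znorm_eq_norm_latticePoint {d : ℕ} (h : Fin d → ℤ) : znorm h = ‖latticePoint h‖ := by
  simp [znorm, EuclideanSpace.norm_eq, latticePoint]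

def unitCube (h : ι → ℤ) : Set (EuclideanSpace ℝ ι) :=
  {x | ∀ i, x i ∈ Ico (h i : ℝ) (h i + 1)}

lemma unitCube_eq_preimage (h : ι → ℤ) :
    unitCube h =
      (MeasurableEquiv.toLp 2 (ι → ℝ)).symm ⁻¹' univ.pi fun i => Ico (h i : ℝ) (h i + 1) := by
  ext x
  simp [unitCube, MeasurableEquiv.coe_toLp_symm]

lemma measurableSet_unitCube [Fintype ι] (h : ι → ℤ) : MeasurableSet (unitCube h) := by
  rw [unitCube_eq_preimage]
  exact (MeasurableEquiv.toLp 2 (ι → ℝ)).symm.measurable (.univ_pi fun _ => measurableSet_Ico)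

lemma volume_unitCube [Fintype ι] (h : ι → ℤ) : volume (unitCube h) = 1 := by
  rw [unitCube_eq_preimage,
    (EuclideanSpace.volume_preserving_symm_measurableEquiv_toLp ι).measure_preimage
      (MeasurableSet.univ_pi fun _ => measurableSet_Ico).nullMeasurableSet,
    volume_pi_pi]
  simp [Real.volume_Ico]

lemma pairwise_disjoint_unitCube : Pairwise (Disjoint on unitCube (ι := ι)) := by
  intro h h' hne
  refine disjoint_left.2 fun x hx hx' => hne (funext fun i => ?_)
  rw [← Int.floor_eq_iff.2 (hx i), Int.floor_eq_iff.2 (hx' i)]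

lemma norm_sub_latticePoint_le [Fintype ι] {h : ι → ℤ} {x : EuclideanSpace ℝ ι}
    (hx : x ∈ unitCube h) : ‖x - latticePoint h‖ ≤ Real.sqrt (Fintype.card ι) := by
  rw [EuclideanSpace.norm_eq]
  refine Real.sqrt_le_sqrt ?_
  calc ∑ i, ‖(x - latticePoint h) i‖ ^ 2 ≤ ∑ _i : ι, (1 : ℝ) := by
        refine Finset.sum_le_sum fun i _ => ?_
        obtain ⟨hlo, hhi⟩ := hx i
        rw [Real.norm_eq_abs, sq_abs, PiLp.sub_apply]
        change (x i - h i) ^ 2 ≤ 1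
        nlinarith
    _ = Fintype.card ι := by simp

end Lattice

lemma one_add_znorm_sq_rpow_neg_le_of_mem_unitCube {d : ℕ} {ν lam : ℝ} (hν : 0 ≤ ν)
    (hR : 0 < lam - Real.sqrt d) {h : Fin d → ℤ} (hlam : lam ≤ znorm h)
    {x : EuclideanSpace ℝ (Fin d)} (hx : x ∈ unitCube h) :
    (1 + znorm h ^ 2) ^ (-ν) ≤
      (1 + d) ^ ν * (Ici (lam - Real.sqrt d)).indicator (fun r : ℝ => r ^ (-(2 * ν))) ‖x‖ := by
  have hdist : ‖x - latticePoint h‖ ≤ Real.sqrt d := by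
    simpa only [Fintype.card_fin] using norm_sub_latticePoint_le hx
  have hnorm := abs_le.1 ((abs_norm_sub_norm_le x (latticePoint h)).trans hdist)
  rw [← znorm_eq_norm_latticePoint] at hnorm
  have hRx : lam - Real.sqrt d ≤ ‖x‖ := by linarith
  rw [indicator_of_mem (mem_Ici.2 hRx)]
  simpa [Real.sq_sqrt (Nat.cast_nonneg d)] using
    one_add_sq_rpow_neg_le (s := Real.sqrt d) hν (hR.trans_le hRx) (by linarith)

lemma tsum_ofReal_one_add_znorm_sq_rpow_neg_le {d : ℕ} (hd : 1 ≤ d) {ν lam : ℝ}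
    (hν : (d : ℝ) / 2 < ν) (hR : 0 < lam - Real.sqrt d) :
    ∑' h : {h : Fin d → ℤ // lam ≤ znorm h}, ENNReal.ofReal ((1 + znorm h.1 ^ 2) ^ (-ν)) ≤
      ENNReal.ofReal ((1 + d) ^ ν * (2 * Real.pi ^ ((d : ℝ) / 2) / Real.Gamma ((d : ℝ) / 2)) *
        ((lam - Real.sqrt d) ^ ((d : ℝ) - 2 * ν) / (2 * ν - d))) := by
  have : Nonempty (Fin d) := ⟨⟨0, hd⟩⟩
  have hp : (finrank ℝ (EuclideanSpace ℝ (Fin d)) : ℝ) < 2 * ν := by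
    rw [finrank_euclideanSpace_fin]; linarith
  have hnonneg : ∀ x : EuclideanSpace ℝ (Fin d), 0 ≤
      (1 + (d : ℝ)) ^ ν * (Ici (lam - Real.sqrt d)).indicator (fun r => r ^ (-(2 * ν))) ‖x‖ :=
    fun x => mul_nonneg (by positivity)
      (indicator_nonneg (fun r hr => Real.rpow_nonneg (hR.le.trans hr) _) _)
  have hsphere := EuclideanSpace.card_mul_volume_real_ball_one (Fin d)
  rw [Fintype.card_fin] at hsphere
  calc _ ≤ ∫⁻ x : EuclideanSpace ℝ (Fin d), ENNReal.ofReal ((1 + d) ^ ν *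
          (Ici (lam - Real.sqrt d)).indicator (fun r : ℝ => r ^ (-(2 * ν))) ‖x‖) :=
        tsum_le_lintegral_of_le_on_pairwiseDisjoint (fun h => measurableSet_unitCube h.1)
          (fun _ _ hne => pairwise_disjoint_unitCube (Subtype.val_injective.ne hne))
          (fun h => (volume_unitCube h.1).ge) fun h _ hx => ENNReal.ofReal_le_ofReal
            (one_add_znorm_sq_rpow_neg_le_of_mem_unitCube (by linarith) hR h.2 hx)
    _ = _ := by
        rw [← ofReal_integral_eq_lintegral_ofReal
          ((integrable_indicator_Ici_rpow_neg_norm volume hR hp).const_mul _)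
          (.of_forall hnonneg), integral_const_mul,
          integral_indicator_Ici_rpow_neg_norm volume hR hp, finrank_euclideanSpace_fin,
          hsphere, mul_assoc]

/-- Tail estimate for lattice sums: for `ν > d/2` and `λ > 2√d`,
`(2π)^{−d} ∑_{|h| ≥ λ} (1+|h|²)^{−ν} ≤ (1+d)^ν / (2^{d−1} π^{d/2} Γ(d/2) (2ν−d) (λ−√d)^{2ν−d})`. -/
theorem stmt_17 (d : ℕ) (hd : 1 ≤ d) (ν lam : ℝ)
    (hν : (d : ℝ) / 2 < ν) (hlam : 2 * Real.sqrt d < lam) :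
    Summable (fun h : {h : Fin d → ℤ // lam ≤ znorm h} =>
      (1 + znorm h.1 ^ 2) ^ (-ν)) ∧
    (∑' h : {h : Fin d → ℤ // lam ≤ znorm h}, (1 + znorm h.1 ^ 2) ^ (-ν)) /
        (2 * Real.pi) ^ d ≤
      ((1 : ℝ) + d) ^ ν /
        (2 ^ (d - 1) * Real.pi ^ ((d : ℝ) / 2) * Real.Gamma ((d : ℝ) / 2) *
          (2 * ν - d) * (lam - Real.sqrt d) ^ (2 * ν - (d : ℝ))) := by
  have hd0 : (0 : ℝ) < d := by exact_mod_cast hd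
  have hR : 0 < lam - Real.sqrt d := by linarith [Real.sqrt_nonneg (d : ℝ)]
  have hΓ : 0 < Real.Gamma ((d : ℝ) / 2) := Real.Gamma_pos_of_pos (by positivity)
  have h2ν : 0 < 2 * ν - d := by linarith
  obtain ⟨hsummable, hle⟩ := summable_and_tsum_le_of_tsum_ofReal_le (fun _ => by positivity)
    (by positivity) (tsum_ofReal_one_add_znorm_sq_rpow_neg_le hd hν hR)
  refine ⟨hsummable, (div_le_div_of_nonneg_right hle (by positivity)).trans_eq ?_⟩
  rw [two_mul_pi_pow_eq hd, show (d : ℝ) - 2 * ν = -(2 * ν - d) by ring, Real.rpow_neg hR.le]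
  field_simp
end

section
/- Let d ≥ 2 be an integer and n > d/2 a real number, and for k ∈ ℤ^d define 𝒦_n(k) := ((1+|k|²)^{n−1}/(2π)^d) ∑_{h∈ℤ^d} |k−h|² / ((1+|h|²)^n (1+|k−h|²)^n). Then: (i) 𝒦_n(k) < ∞ for every k ∈ ℤ^d; (ii) 𝒦_n(k) → Σ_n as |k| → ∞, where Σ_n := (2π)^{−d} ∑_{h∈ℤ^d} (1+|h|²)^{−n}; and consequently (iii) sup_{k∈ℤ^d} 𝒦_n(k) < ∞. -/
/-!
Write `w(x) = 1 + |x|²`. Since `|k - h|² ≤ w(k - h)`, the summand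
`w(k)^(n-1) |k - h|² / (w(h)^n w(k - h)^n)` of `(2π)^d 𝒦_n(k)` is at most
`w(k)^(n-1) w(h)^(-n) w(k - h)^(1-n)`. Where `|h| ≤ |k - h|` we have `w(k) ≤ 4 w(k - h)`, so the
summand is dominated by `4^(n-1) w(h)^(-n)`, which is summable as `2n > d`; it tends to
`w(h)^(-n)` pointwise, and dominated convergence yields `Σ_n`. Where `|k - h| < |h|` we have
`w(k) ≤ 4 w(h)` and `w(k - h) ≤ w(h)`; trading `w(h)^(-ε)` for `4^ε w(k)^(-ε)`,
with `0 < ε ≤ 1` small enough that `2(n - ε) > d`, bounds this part of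
the sum by `C w(k)^(-ε) ∑ w^(-(n-ε))`, which tends to `0`.
-/

open Set

open Filter Asymptotics Topology

namespace LatticeKernel

section Seminormed

variable {E : Type*} [SeminormedAddCommGroup E] {n : ℝ}

/-- `∑' h, kernelTerm n k h` is `(2π)^d 𝒦_n(k)`. -/
noncomputable def kernelTerm (n : ℝ) (k h : E) : ℝ :=
  (1 + ‖k‖ ^ 2) ^ (n - 1) * (‖k - h‖ ^ 2 / ((1 + ‖h‖ ^ 2) ^ n * (1 + ‖k - h‖ ^ 2) ^ n))

lemma kernelTerm_nonneg (n : ℝ) (k h : E) : 0 ≤ kernelTerm n k h := by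
  unfold kernelTerm
  positivity

lemma kernelTerm_le (n : ℝ) (k h : E) :
    kernelTerm n k h ≤
      (1 + ‖k‖ ^ 2) ^ (n - 1) * ((1 + ‖h‖ ^ 2) ^ (-n) * (1 + ‖k - h‖ ^ 2) ^ (-(n - 1))) := by
  have hV : 0 < 1 + ‖k - h‖ ^ 2 := by positivity
  calc kernelTerm n k h
      ≤ (1 + ‖k‖ ^ 2) ^ (n - 1) *
          ((1 + ‖k - h‖ ^ 2) / ((1 + ‖h‖ ^ 2) ^ n * (1 + ‖k - h‖ ^ 2) ^ n)) := by
        unfold kernelTerm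
        gcongr
        linarith
    _ = _ := by
        rw [neg_sub, Real.rpow_sub hV, Real.rpow_one, Real.rpow_neg (by positivity)]
        ring

lemma summable_kernelTerm (hn : 1 ≤ n) (hs : Summable fun h : E ↦ (1 + ‖h‖ ^ 2) ^ (-n))
    (k : E) : Summable (kernelTerm n k) := by
  refine (hs.mul_left ((1 + ‖k‖ ^ 2) ^ (n - 1))).of_nonneg_of_le (kernelTerm_nonneg n k)
    fun h ↦ (kernelTerm_le n k h).trans ?_
  gcongr
  exact mul_le_of_le_one_right (by positivity) <|
    Real.rpow_le_one_of_one_le_of_nonpos (by nlinarith [sq_nonneg ‖k - h‖]) (by linarith)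

lemma summable_one_add_norm_sq_rpow_neg_of_le {p q : ℝ} (hpq : p ≤ q)
    (hs : Summable fun h : E ↦ (1 + ‖h‖ ^ 2) ^ (-p)) :
    Summable fun h : E ↦ (1 + ‖h‖ ^ 2) ^ (-q) :=
  hs.of_nonneg_of_le (fun _ ↦ by positivity) fun h ↦
    Real.rpow_le_rpow_of_exponent_le (by nlinarith [sq_nonneg ‖h‖]) (neg_le_neg hpq)

lemma one_add_sq_le_four_mul {a b : ℝ} (ha : 0 ≤ a) (hab : a ≤ 2 * b) :
    1 + a ^ 2 ≤ 4 * (1 + b ^ 2) := by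
  nlinarith

lemma kernelTerm_le_of_norm_le (hn : 1 ≤ n) {k h : E} (hkh : ‖h‖ ≤ ‖k - h‖) :
    kernelTerm n k h ≤ 4 ^ (n - 1) * (1 + ‖h‖ ^ 2) ^ (-n) := by
  have hV : 0 < 1 + ‖k - h‖ ^ 2 := by positivity
  have hUV : 1 + ‖k‖ ^ 2 ≤ 4 * (1 + ‖k - h‖ ^ 2) :=
    one_add_sq_le_four_mul (norm_nonneg k) (by linarith [norm_le_insert' k h])
  calc kernelTerm n k h
      ≤ (4 * (1 + ‖k - h‖ ^ 2)) ^ (n - 1) *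
          ((1 + ‖h‖ ^ 2) ^ (-n) * (1 + ‖k - h‖ ^ 2) ^ (-(n - 1))) := by
        refine (kernelTerm_le n k h).trans ?_
        gcongr
    _ = 4 ^ (n - 1) * (1 + ‖h‖ ^ 2) ^ (-n) := by
        rw [Real.mul_rpow (by norm_num) hV.le, Real.rpow_neg hV.le]
        field_simp

lemma kernelTerm_le_of_norm_sub_le (hn : 1 ≤ n) {ε : ℝ} (hε : 0 ≤ ε) (hε1 : ε ≤ 1)
    {k h : E} (hkh : ‖k - h‖ ≤ ‖h‖) :
    kernelTerm n k h ≤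
      4 ^ (n - 1 + ε) * (1 + ‖k‖ ^ 2) ^ (-ε) * (1 + ‖k - h‖ ^ 2) ^ (-(n - ε)) := by
  set U := 1 + ‖k‖ ^ 2
  set P := 1 + ‖h‖ ^ 2
  set V := 1 + ‖k - h‖ ^ 2
  have hU : 0 < U := by positivity
  have hP : 0 < P := by positivity
  have hV : 0 < V := by positivity
  have hUP : U ≤ 4 * P :=
    one_add_sq_le_four_mul (norm_nonneg k) (by linarith [norm_le_insert' k h])
  have hVP : V ≤ P := by simp only [V, P]; gcongr
  have hPε : P ^ (-ε) ≤ 4 ^ ε * U ^ (-ε) := calc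
    P ^ (-ε) = 4 ^ ε * (4 * P) ^ (-ε) := by
      rw [Real.mul_rpow (by norm_num) hP.le, Real.rpow_neg (by norm_num : (0 : ℝ) ≤ 4)]
      field_simp
    _ ≤ 4 ^ ε * U ^ (-ε) := by
      gcongr 4 ^ ε * ?_
      exact Real.rpow_le_rpow_of_nonpos hU hUP (neg_nonpos.2 hε)
  calc kernelTerm n k h
      ≤ (4 * P) ^ (n - 1) * (P ^ (-n) * V ^ (-(n - 1))) := by
        refine (kernelTerm_le n k h).trans ?_
        gcongr
    _ = 4 ^ (n - 1) * P ^ (-ε) * P ^ (-(1 - ε)) * V ^ (-(n - 1)) := by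
        have e : P ^ (n - 1) * P ^ (-n) = P ^ (-ε) * P ^ (-(1 - ε)) := by
          rw [← Real.rpow_add hP, ← Real.rpow_add hP]
          ring_nf
        rw [Real.mul_rpow (by norm_num) hP.le]
        linear_combination (4 ^ (n - 1) * V ^ (-(n - 1))) * e
    _ ≤ 4 ^ (n - 1) * (4 ^ ε * U ^ (-ε)) * V ^ (-(1 - ε)) * V ^ (-(n - 1)) := by
        gcongr _ * ?_ * ?_ * _
        exact Real.rpow_le_rpow_of_nonpos hV hVP (by linarith)
    _ = 4 ^ (n - 1 + ε) * U ^ (-ε) * V ^ (-(n - ε)) := by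
        rw [Real.rpow_add (by norm_num), mul_assoc _ (V ^ _), ← Real.rpow_add hV]
        ring_nf

lemma isEquivalent_one_add_sq {α : Type*} {l : Filter α} {u v : α → ℝ} (huv : u ~[l] v)
    (hv : Tendsto v l atTop) :
    (fun x ↦ 1 + u x ^ 2) ~[l] fun x ↦ 1 + v x ^ 2 := by
  have hv2 : Tendsto (norm ∘ fun x ↦ v x ^ 2) l atTop :=
    tendsto_norm_atTop_atTop.comp ((tendsto_pow_atTop two_ne_zero).comp hv)
  exact ((huv.pow 2).const_add_of_norm_tendsto_atTop hv2).trans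
    (IsEquivalent.refl.const_add_of_norm_tendsto_atTop hv2).symm

variable {l : Filter E}

lemma tendsto_norm_sub_atTop (hl : Tendsto (‖·‖) l atTop) (h : E) :
    Tendsto (fun k ↦ ‖k - h‖) l atTop :=
  tendsto_atTop_mono (fun k ↦ by linarith [norm_sub_norm_le k h])
    (tendsto_atTop_add_const_right _ (-‖h‖) hl)

lemma tendsto_kernelTerm (hl : Tendsto (‖·‖) l atTop) (h : E) :
    Tendsto (kernelTerm n · h) l (𝓝 ((1 + ‖h‖ ^ 2) ^ (-n))) := by
  have hsub : (fun k ↦ ‖k - h‖) ~[l] fun k ↦ ‖k‖ := by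
    refine IsLittleO.isEquivalent <| IsBigO.trans_isLittleO (g := fun _ ↦ (1 : ℝ)) ?_
      (isLittleO_const_left.2 (Or.inr (tendsto_norm_atTop_atTop.comp hl)))
    refine isBigO_of_le' (c := ‖h‖) l fun k ↦ ?_
    simpa [norm_sub_rev k h] using abs_norm_sub_norm_le (k - h) k
  have hUV : (fun k ↦ 1 + ‖k‖ ^ 2) ~[l] fun k ↦ 1 + ‖k - h‖ ^ 2 :=
    (isEquivalent_one_add_sq hsub hl).symm
  have hbV : (fun k ↦ ‖k - h‖ ^ 2) ~[l] fun k ↦ 1 + ‖k - h‖ ^ 2 :=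
    (IsEquivalent.refl.const_add_of_norm_tendsto_atTop (tendsto_norm_atTop_atTop.comp
      ((tendsto_pow_atTop two_ne_zero).comp (tendsto_norm_sub_atTop hl h)))).symm
  -- `w(k)^(n-1) |k - h|² / (w(h)^n w(k - h)^n) ~ w(k - h)^(n-1) w(k - h) / (w(h)^n w(k - h)^n)`,
  -- and the right-hand side is the constant `w(h)^(-n)`.
  have hequiv := (hUV.rpow (r := n - 1) (fun k ↦ by positivity)).mul
    (hbV.div (IsEquivalent.refl (u := fun k ↦ (1 + ‖h‖ ^ 2) ^ n * (1 + ‖k - h‖ ^ 2) ^ n)))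
  refine (hequiv.congr_right (Eventually.of_forall fun k ↦ ?_)).tendsto_const
  have hV : 0 < 1 + ‖k - h‖ ^ 2 := by positivity
  simp only [Pi.mul_apply, Pi.div_apply, Pi.pow_apply, Function.const_apply]
  rw [Real.rpow_sub_one hV.ne' n, Real.rpow_neg (by positivity)]
  field_simp

lemma tendsto_tsum_indicator_norm_le_norm_sub (hl : Tendsto (‖·‖) l atTop) (hn : 1 ≤ n)
    (hs : Summable fun h : E ↦ (1 + ‖h‖ ^ 2) ^ (-n)) :
    Tendsto (fun k ↦ ∑' h, {h : E | ‖h‖ ≤ ‖k - h‖}.indicator (kernelTerm n k) h) l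
      (𝓝 (∑' h : E, (1 + ‖h‖ ^ 2) ^ (-n))) := by
  refine tendsto_tsum_of_dominated_convergence (hs.mul_left (4 ^ (n - 1))) (fun h ↦ ?_)
    (Eventually.of_forall fun k h ↦ ?_)
  · refine (tendsto_kernelTerm hl h).congr' ?_
    filter_upwards [(tendsto_norm_sub_atTop hl h).eventually_ge_atTop ‖h‖] with k hk
    exact (Set.indicator_of_mem (s := {h : E | ‖h‖ ≤ ‖k - h‖}) hk _).symm
  · rw [norm_indicator_eq_indicator_norm]
    exact Set.indicator_apply_le' (fun hkh ↦
      (Real.norm_of_nonneg (kernelTerm_nonneg n k h)).trans_le (kernelTerm_le_of_norm_le hn hkh))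
      fun _ ↦ by positivity

lemma tendsto_tsum_indicator_norm_sub_lt_norm (hl : Tendsto (‖·‖) l atTop) (hn : 1 ≤ n)
    {ε : ℝ} (hε : 0 < ε) (hε1 : ε ≤ 1) (hs : Summable fun h : E ↦ (1 + ‖h‖ ^ 2) ^ (-(n - ε))) :
    Tendsto (fun k ↦ ∑' h, {h : E | ‖h‖ ≤ ‖k - h‖}ᶜ.indicator (kernelTerm n k) h) l (𝓝 0) := by
  set C := 4 ^ (n - 1 + ε) * ∑' h : E, (1 + ‖h‖ ^ 2) ^ (-(n - ε))
  have hbound : ∀ k h, {h : E | ‖h‖ ≤ ‖k - h‖}ᶜ.indicator (kernelTerm n k) h ≤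
      4 ^ (n - 1 + ε) * (1 + ‖k‖ ^ 2) ^ (-ε) * (1 + ‖k - h‖ ^ 2) ^ (-(n - ε)) := fun k h ↦
    Set.indicator_apply_le' (fun hkh ↦ kernelTerm_le_of_norm_sub_le hn hε.le hε1
      (le_of_lt (not_le.1 hkh))) fun _ ↦ by positivity
  have hsum : ∀ k : E, Summable fun h ↦ (1 + ‖k - h‖ ^ 2) ^ (-(n - ε)) := fun k ↦
    (Equiv.subLeft k).summable_iff.2 hs
  have hle : ∀ k, ∑' h, {h : E | ‖h‖ ≤ ‖k - h‖}ᶜ.indicator (kernelTerm n k) h ≤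
      C * (1 + ‖k‖ ^ 2) ^ (-ε) := fun k ↦ calc
    _ ≤ ∑' h, 4 ^ (n - 1 + ε) * (1 + ‖k‖ ^ 2) ^ (-ε) * (1 + ‖k - h‖ ^ 2) ^ (-(n - ε)) :=
        Summable.tsum_le_tsum (hbound k) (((hsum k).mul_left _).of_nonneg_of_le
          (fun h ↦ Set.indicator_nonneg (fun h _ ↦ kernelTerm_nonneg n k h) h) (hbound k))
          ((hsum k).mul_left _)
    _ = C * (1 + ‖k‖ ^ 2) ^ (-ε) := by
        have hshift := (Equiv.subLeft k).tsum_eq fun h ↦ (1 + ‖h‖ ^ 2) ^ (-(n - ε))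
        simp only [Equiv.subLeft_apply] at hshift
        rw [tsum_mul_left, hshift]
        ring
  have hU : Tendsto (fun k : E ↦ (1 + ‖k‖ ^ 2) ^ (-ε)) l (𝓝 0) :=
    (tendsto_rpow_neg_atTop hε).comp
      (tendsto_atTop_add_const_left _ 1 ((tendsto_pow_atTop two_ne_zero).comp hl))
  exact squeeze_zero (fun k ↦ tsum_nonneg fun h ↦
    Set.indicator_nonneg (fun h _ ↦ kernelTerm_nonneg n k h) h) hle (by simpa using hU.const_mul C)

theorem tendsto_tsum_kernelTerm (hl : Tendsto (‖·‖) l atTop) (hn : 1 ≤ n) {p : ℝ} (hpn : p < n)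
    (hs : Summable fun h : E ↦ (1 + ‖h‖ ^ 2) ^ (-p)) :
    Tendsto (fun k ↦ ∑' h, kernelTerm n k h) l (𝓝 (∑' h : E, (1 + ‖h‖ ^ 2) ^ (-n))) := by
  set ε := min 1 (n - p)
  have hε : 0 < ε := lt_min one_pos (sub_pos.2 hpn)
  have hsn := summable_one_add_norm_sq_rpow_neg_of_le hpn.le hs
  have hsε := summable_one_add_norm_sq_rpow_neg_of_le (q := n - ε)
    (by linarith [min_le_right 1 (n - p)]) hs
  have hsplit : ∀ k, ∑' h, kernelTerm n k h =
      ∑' h, {h : E | ‖h‖ ≤ ‖k - h‖}.indicator (kernelTerm n k) h +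
        ∑' h, {h : E | ‖h‖ ≤ ‖k - h‖}ᶜ.indicator (kernelTerm n k) h := fun k ↦ by
    rw [← Summable.tsum_add ((summable_kernelTerm hn hsn k).indicator _)
      ((summable_kernelTerm hn hsn k).indicator _)]
    simp only [Set.indicator_self_add_compl_apply]
  simpa [← hsplit] using (tendsto_tsum_indicator_norm_le_norm_sub hl hn hsn).add
    (tendsto_tsum_indicator_norm_sub_lt_norm hl hn hε (min_le_left _ _) hsε)

end Seminormed

section Lattice

lemma summable_one_add_sq_rpow_neg_int {q : ℝ} (hq : 1 < 2 * q) :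
    Summable fun m : ℤ ↦ (1 + (m : ℝ) ^ 2) ^ (-q) := by
  refine (Real.summable_abs_int_rpow hq).of_norm_bounded_eventually ?_
  filter_upwards [eventually_cofinite_ne 0] with m hm
  have hm' : (0 : ℝ) < (m : ℝ) ^ 2 := by positivity
  rw [Real.norm_of_nonneg (by positivity)]
  calc (1 + (m : ℝ) ^ 2) ^ (-q) ≤ ((m : ℝ) ^ 2) ^ (-q) :=
        Real.rpow_le_rpow_of_nonpos hm' (by linarith) (by linarith)
    _ = |(m : ℝ)| ^ (-(2 * q)) := by
        rw [← sq_abs, ← Real.rpow_natCast, ← Real.rpow_mul (abs_nonneg _)]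
        ring_nf

lemma summable_prod_apply_fin {β : Type*} {f : β → ℝ} (hf0 : ∀ b, 0 ≤ f b) (hf : Summable f) :
    ∀ m : ℕ, Summable fun x : Fin m → β ↦ ∏ i, f (x i)
  | 0 => .of_finite
  | m + 1 => by
    refine (Fin.consEquiv fun _ ↦ β).summable_iff.1 <|
      (hf.mul_of_nonneg (summable_prod_apply_fin hf0 hf m) hf0 fun x ↦
        Finset.prod_nonneg fun i _ ↦ hf0 _).congr fun x ↦ ?_
    simp [Fin.prod_univ_succ]

lemma prod_one_add_sq_le {ι : Type*} [Fintype ι] (x : ι → ℝ) :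
    ∏ i, (1 + x i ^ 2) ≤ (1 + ∑ i, x i ^ 2) ^ Fintype.card ι := by
  rw [← Finset.card_univ, ← Finset.prod_const]
  gcongr with i
  exact Finset.single_le_sum (fun j _ ↦ sq_nonneg (x j)) (Finset.mem_univ i)

variable {d : ℕ}

lemma norm_sq_withLp_int (x : WithLp 2 (Fin d → ℤ)) : ‖x‖ ^ 2 = ∑ i, (x.ofLp i : ℝ) ^ 2 := by
  simp [PiLp.norm_sq_eq_of_L2, Int.norm_eq_abs, sq_abs]

lemma tendsto_norm_withLp_int_cofinite_atTop :
    Tendsto (‖·‖ : WithLp 2 (Fin d → ℤ) → ℝ) cofinite atTop := by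
  have hsup : Tendsto (‖·‖ : (Fin d → ℤ) → ℝ) cofinite atTop :=
    cocompact_eq_cofinite (Fin d → ℤ) ▸ tendsto_norm_cocompact_atTop
  refine tendsto_atTop_mono (fun x ↦ ?_) (hsup.comp (WithLp.ofLp_injective 2).tendsto_cofinite)
  exact (pi_norm_le_iff_of_nonneg (norm_nonneg x)).2 fun i ↦ PiLp.norm_apply_le x i

lemma summable_one_add_norm_sq_rpow_neg_withLp_int {p : ℝ} (hp : d < 2 * p) :
    Summable fun x : WithLp 2 (Fin d → ℤ) ↦ (1 + ‖x‖ ^ 2) ^ (-p) := by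
  rcases Nat.eq_zero_or_pos d with rfl | hd
  · exact .of_finite
  have hd' : (0 : ℝ) < d := by exact_mod_cast hd
  have hq : 1 < 2 * (p / d) := by rw [mul_div_assoc', lt_div_iff₀ hd']; linarith
  have hprod := (WithLp.equiv 2 (Fin d → ℤ)).summable_iff.2 <| summable_prod_apply_fin
    (fun m ↦ by positivity) (summable_one_add_sq_rpow_neg_int hq) d
  refine hprod.of_nonneg_of_le (fun x ↦ by positivity) fun x ↦ ?_
  set y : Fin d → ℝ := fun i ↦ (x.ofLp i : ℝ)
  have hS : 0 < 1 + ∑ i, y i ^ 2 := by positivity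
  have hx : ‖x‖ ^ 2 = ∑ i, y i ^ 2 := norm_sq_withLp_int x
  calc (1 + ‖x‖ ^ 2) ^ (-p) = ((1 + ∑ i, y i ^ 2) ^ d) ^ (-(p / d)) := by
        rw [hx, ← Real.rpow_natCast, ← Real.rpow_mul hS.le]
        field_simp
    _ ≤ (∏ i, (1 + y i ^ 2)) ^ (-(p / d)) :=
        Real.rpow_le_rpow_of_nonpos (by positivity)
          ((prod_one_add_sq_le y).trans_eq (by rw [Fintype.card_fin]))
          (neg_nonpos.2 (div_nonneg (by linarith) hd'.le))
    _ = ∏ i, (1 + y i ^ 2) ^ (-(p / d)) :=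
        (Real.finsetProd_rpow _ _ (fun i _ ↦ by positivity) _).symm

lemma znorm_eq_norm_toLp (h : Fin d → ℤ) : znorm h = ‖WithLp.toLp 2 h‖ := by
  rw [znorm, ← norm_sq_withLp_int, Real.sqrt_sq (norm_nonneg _)]

lemma kernelTerm_toLp (n : ℝ) (k h : Fin d → ℤ) :
    kernelTerm n (WithLp.toLp 2 k) (WithLp.toLp 2 h) = (1 + znorm k ^ 2) ^ (n - 1) *
      (znorm (k - h) ^ 2 / ((1 + znorm h ^ 2) ^ n * (1 + znorm (k - h) ^ 2) ^ n)) := by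
  simp only [kernelTerm, znorm_eq_norm_toLp, WithLp.toLp_sub]

lemma tsum_one_add_znorm_sq_rpow (s : ℝ) :
    ∑' h : Fin d → ℤ, (1 + znorm h ^ 2) ^ s =
      ∑' x : WithLp 2 (Fin d → ℤ), (1 + ‖x‖ ^ 2) ^ s := by
  simp only [← (WithLp.equiv 2 (Fin d → ℤ)).symm.tsum_eq, WithLp.equiv_symm_apply,
    znorm_eq_norm_toLp]

end Lattice

end LatticeKernel

open LatticeKernel in
/-- Properties of `𝒦_n(k) = (1+|k|²)^{n−1}(2π)^{−d} ∑_h |k−h|²/((1+|h|²)^n (1+|k−h|²)^n)`: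
each `𝒦_n(k)` is finite, `𝒦_n(k) → Σ_n` as `k → ∞`, and `sup_k 𝒦_n(k)` is finite. -/
theorem stmt_19 (d : ℕ) (hd : 2 ≤ d) (n : ℝ) (hn : (d : ℝ) / 2 < n)
    (KK : (Fin d → ℤ) → ℝ)
    (hKK : ∀ k, KK k = (1 + znorm k ^ 2) ^ (n - 1) / (2 * Real.pi) ^ d *
      ∑' h : Fin d → ℤ,
        znorm (k - h) ^ 2 /
          ((1 + znorm h ^ 2) ^ n * (1 + znorm (k - h) ^ 2) ^ n)) :
    (∀ k : Fin d → ℤ, Summable (fun h : Fin d → ℤ =>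
      znorm (k - h) ^ 2 /
        ((1 + znorm h ^ 2) ^ n * (1 + znorm (k - h) ^ 2) ^ n))) ∧
    Filter.Tendsto KK Filter.cofinite
      (nhds ((∑' h : Fin d → ℤ, (1 + znorm h ^ 2) ^ (-n)) / (2 * Real.pi) ^ d)) ∧
    BddAbove (Set.range KK) := by
  have hn1 : 1 ≤ n := by
    have : (2 : ℝ) ≤ d := by exact_mod_cast hd
    linarith
  obtain ⟨p, hdp, hpn⟩ := exists_between hn
  have hs := summable_one_add_norm_sq_rpow_neg_withLp_int (d := d) (p := p) (by linarith)
  have hKK' : ∀ k, KK k = (∑' h, kernelTerm n (WithLp.toLp 2 k) h) / (2 * Real.pi) ^ d := by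
    intro k
    rw [hKK, ← (WithLp.equiv 2 (Fin d → ℤ)).symm.tsum_eq, WithLp.equiv_symm_apply]
    simp only [kernelTerm_toLp, tsum_mul_left]
    ring
  have hTK : Tendsto KK cofinite
      (𝓝 ((∑' h : Fin d → ℤ, (1 + znorm h ^ 2) ^ (-n)) / (2 * Real.pi) ^ d)) := by
    rw [funext hKK', tsum_one_add_znorm_sq_rpow]
    exact ((tendsto_tsum_kernelTerm tendsto_norm_withLp_int_cofinite_atTop hn1 hpn hs).comp
      (WithLp.toLp_injective 2).tendsto_cofinite).div_const _
  refine ⟨fun k ↦ ?_, hTK, hTK.bddAbove_range_of_cofinite⟩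
  refine (summable_mul_left_iff (by positivity : (1 + znorm k ^ 2) ^ (n - 1) ≠ 0)).1 ?_
  simpa only [← kernelTerm_toLp, Function.comp_def, WithLp.equiv_symm_apply] using
    (WithLp.equiv 2 (Fin d → ℤ)).symm.summable_iff.2
      (summable_kernelTerm hn1 (summable_one_add_norm_sq_rpow_neg_of_le hpn.le hs) _)
end
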